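/- arXiv:2302.13888 — 7 statements merged into one kernel-verified Lean document; each statement's English description precedes it below -/
import Mathlib

section
/- There exist a k-Prize Weighted Voting Game G and an outcome ω of G such that ω is susceptible to an MCD but not susceptible to any SCD; hence for some game G the set of outcomes susceptible to an SCD is a strict subset of the set of outcomes susceptible to an MCD. -/
open Finset
open scoped Classical

/-- A `k`-Prize Weighted Voting Game with `n` players `{0, ..., n-1}`:
weights, prize values in descending order, and a strict total order `pref` (`≻`)
on coalitions that refines the comparison of total weights. -/
structure kWVG (n k : ℕ) : Type where
  /-- the weights of the players -/
  w : Fin n → ℚ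
  w_pos : ∀ i, 0 < w i
  /-- the prize values, in descending order -/
  p : Fin k → ℚ
  p_pos : ∀ j, 0 < p j
  p_desc : ∀ j j' : Fin k, j ≤ j' → p j' ≤ p j
  k_pos : 0 < k
  k_le_n : k ≤ n
  /-- the strict total order `≻` on coalitions (tie-breaking order) -/
  pref : Finset (Fin n) → Finset (Fin n) → Prop
  pref_irrefl : ∀ A, ¬ pref A A
  pref_trans : ∀ A B C, pref A B → pref B C → pref A C
  pref_total : ∀ A B, A ≠ B → pref A B ∨ pref B A
  pref_weight : ∀ A B, (∑ i ∈ B, w i) < (∑ i ∈ A, w i) → pref A B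

variable {n k : ℕ}

/-- `π` is a partition of `D` into nonempty pairwise disjoint coalitions. -/
def IsPartition (π : Finset (Finset (Fin n))) (D : Finset (Fin n)) : Prop :=
  (∀ C ∈ π, C.Nonempty) ∧
  (∀ A ∈ π, ∀ B ∈ π, A ≠ B → Disjoint A B) ∧
  π.sup id = D

/-- The value `v(C, π)` of coalition `C` in the partition `π`: if `r` is the number of
coalitions of `π` that are `≻`-larger than `C` (so that `C` is the `(r+1)`-st largest
coalition of `π`), then `C` gets the `(r+1)`-st prize if `r < k`, and `0` otherwise. -/
noncomputable def coalitionValue (G : kWVG n k) (π : Finset (Finset (Fin n)))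
    (C : Finset (Fin n)) : ℚ :=
  if h : (π.filter (fun C' => G.pref C' C)).card < k then
    G.p ⟨(π.filter (fun C' => G.pref C' C)).card, h⟩
  else 0

/-- An outcome of the game `G`: a partition of all the players together with
nonnegative payoffs, where each coalition's payoffs sum to its value. -/
structure Outcome (G : kWVG n k) : Type where
  part : Finset (Finset (Fin n))
  ispart : IsPartition part Finset.univ
  x : Fin n → ℚ
  x_nonneg : ∀ i, 0 ≤ x i
  x_budget : ∀ C ∈ part, ∑ i ∈ C, x i = coalitionValue G part C

/-- A single-coalition deviation (SCD) from an outcome with payoffs `x`. -/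
def IsSCD (G : kWVG n k) (x : Fin n → ℚ) (C : Finset (Fin n)) : Prop :=
  C.Nonempty ∧
  ∀ π', IsPartition π' Finset.univ → C ∈ π' → (∑ i ∈ C, x i) < coalitionValue G π' C

/-- A deviating partition: a nonempty family of nonempty, pairwise disjoint coalitions
(that is, a partition of the nonempty set `D := πD.sup id ⊆ N` of deviators). -/
def IsDevPartition (πD : Finset (Finset (Fin n))) : Prop :=
  πD.Nonempty ∧ (∀ C ∈ πD, C.Nonempty) ∧ (∀ A ∈ πD, ∀ B ∈ πD, A ≠ B → Disjoint A B)

/-- A multi-coalition deviation (MCD) from an outcome with payoffs `x`. -/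
def IsMCD (G : kWVG n k) (x : Fin n → ℚ) (πD : Finset (Finset (Fin n))) : Prop :=
  IsDevPartition πD ∧
  ∀ π', IsPartition π' Finset.univ → πD ⊆ π' →
    ∀ C ∈ πD, (∑ i ∈ C, x i) < coalitionValue G π' C

/-- A weak multi-coalition deviation (wMCD) from an outcome with payoffs `x`. -/
def IswMCD (G : kWVG n k) (x : Fin n → ℚ) (πD : Finset (Finset (Fin n))) : Prop :=
  IsDevPartition πD ∧
  ∀ π', IsPartition π' Finset.univ → πD ⊆ π' →
    (∀ C ∈ πD, (∑ i ∈ C, x i) ≤ coalitionValue G π' C) ∧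
    (∃ C ∈ πD, (∑ i ∈ C, x i) < coalitionValue G π' C)

/-- A multi-coalition deviation with inter-coalition transfer (MCDT) from an outcome
with payoffs `x`. -/
def IsMCDT (G : kWVG n k) (x : Fin n → ℚ) (πD : Finset (Finset (Fin n))) : Prop :=
  IsDevPartition πD ∧
  ∀ π', IsPartition π' Finset.univ → πD ⊆ π' →
    (∑ i ∈ πD.sup id, x i) < ∑ C ∈ πD, coalitionValue G π' C

/-- An outcome is SCD-stable if no SCD from it exists. -/
def SCDStable (G : kWVG n k) (ω : Outcome G) : Prop := ¬ ∃ C, IsSCD G ω.x C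

/-- An outcome is MCD-stable if no MCD from it exists. -/
def MCDStable (G : kWVG n k) (ω : Outcome G) : Prop := ¬ ∃ πD, IsMCD G ω.x πD

/-- An outcome is wMCD-stable if no wMCD from it exists. -/
def wMCDStable (G : kWVG n k) (ω : Outcome G) : Prop := ¬ ∃ πD, IswMCD G ω.x πD

/-- An outcome is MCDT-stable if no MCDT from it exists. -/
def MCDTStable (G : kWVG n k) (ω : Outcome G) : Prop := ¬ ∃ πD, IsMCDT G ω.x πD


/-! ### Auxiliary material for the proof -/

/-- Tie-breaking values within each size class of coalitions of `Fin 4`. -/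
def tb4 (S : Finset (Fin 4)) : ℕ :=
  if S = {2} then 3 else if S = {1} then 2 else if S = {0} then 1 else if S = {3} then 0
  else if S = {0,3} then 5 else if S = {2,3} then 4 else if S = {1,3} then 3
  else if S = {1,2} then 2 else if S = {0,1} then 1 else if S = {0,2} then 0
  else if S = {0,1,2} then 0 else if S = {0,1,3} then 1 else if S = {0,2,3} then 2
  else if S = {1,2,3} then 3 else 0

/-- The injective key inducing the preference order on coalitions. -/
def mykey (S : Finset (Fin 4)) : ℕ := 100 * S.card + tb4 S

lemma tb4_lt (S : Finset (Fin 4)) : tb4 S < 100 := by revert S; decide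

/-- The payoff vector of our outcome. -/
def myx : Fin 4 → ℚ := ![1, 1, 2, 3]

/-- The concrete game: 4 players of weight 1 each, 3 prizes `4 > 2 > 1`,
preference given by `mykey`. -/
noncomputable def myG : kWVG 4 3 where
  w := fun _ => 1
  w_pos := fun _ => one_pos
  p := ![4, 2, 1]
  p_pos := by decide
  p_desc := by decide
  k_pos := by norm_num
  k_le_n := by norm_num
  pref := fun A B => mykey B < mykey A
  pref_irrefl := fun A => lt_irrefl _
  pref_trans := fun A B C h1 h2 => h2.trans h1
  pref_total := by
    intro A B hne
    rcases lt_or_gt_of_ne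
      (show mykey A ≠ mykey B from fun h => hne (by revert h; revert A B; decide)) with h | h
    · exact Or.inr h
    · exact Or.inl h
  pref_weight := by
    intro A B h
    have hB : (∑ i ∈ B, (1:ℚ)) = (B.card : ℚ) := by simp
    have hA : (∑ i ∈ A, (1:ℚ)) = (A.card : ℚ) := by simp
    rw [hA, hB] at h
    have hc : B.card < A.card := by exact_mod_cast h
    have := tb4_lt A; have := tb4_lt B
    show mykey B < mykey A
    unfold mykey
    omega

lemma myPartition (π : Finset (Finset (Fin 4)))
    (h1 : ∀ C ∈ π, C.Nonempty) (h2 : ∀ A ∈ π, ∀ B ∈ π, A ≠ B → A ∩ B = ∅)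
    (h3 : π.sup id = Finset.univ) : IsPartition π Finset.univ :=
  ⟨h1, fun A hA B hB hne => Finset.disjoint_iff_inter_eq_empty.mpr (h2 A hA B hB hne), h3⟩

lemma myG_value' (π : Finset (Finset (Fin 4))) (C : Finset (Fin 4))
    (S : Finset (Finset (Fin 4)))
    (h : ∀ A, A ∈ π ∧ mykey C < mykey A ↔ A ∈ S) (r : ℕ) (hr : S.card = r) (hk : r < 3)
    (v : ℚ) (hv : ∀ hk' : r < 3, myG.p ⟨r, hk'⟩ = v) :
    coalitionValue myG π C = v := by
  have hfil : π.filter (fun C' => myG.pref C' C) = S := by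
    ext A; rw [Finset.mem_filter]; exact h A
  rw [coalitionValue]
  simp only [hfil, hr]
  rw [dif_pos hk, hv hk]

lemma myG_value0 (π : Finset (Finset (Fin 4))) (C : Finset (Fin 4))
    (S : Finset (Finset (Fin 4)))
    (h : ∀ A, A ∈ π ∧ mykey C < mykey A ↔ A ∈ S) (r : ℕ) (hr : S.card = r) (hk : ¬ r < 3) :
    coalitionValue myG π C = 0 := by
  have hfil : π.filter (fun C' => myG.pref C' C) = S := by
    ext A; rw [Finset.mem_filter]; exact h A
  rw [coalitionValue]
  simp only [hfil, hr]
  rw [dif_neg hk]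

lemma no_scd_case (C : Finset (Fin 4)) (π' : Finset (Finset (Fin 4)))
    (hpart : IsPartition π' Finset.univ) (hmem : C ∈ π')
    (hle : coalitionValue myG π' C ≤ ∑ i ∈ C, myx i)
    (h : ∀ π'', IsPartition π'' Finset.univ → C ∈ π'' →
      (∑ i ∈ C, myx i) < coalitionValue myG π'' C) : False :=
  absurd (h π' hpart hmem) (not_lt.mpr hle)

/-- The only partition of all players extending `{{0}, {1,2}}` is `{{0}, {1,2}, {3}}`. -/
lemma completion_unique (π' : Finset (Finset (Fin 4))) (hp : IsPartition π' Finset.univ)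
    (h0 : ({0} : Finset (Fin 4)) ∈ π') (h12 : ({1,2} : Finset (Fin 4)) ∈ π') :
    π' = {({0} : Finset (Fin 4)), {1,2}, {3}} := by
  obtain ⟨hne, hdisj, hsup⟩ := hp
  have h3 : (3 : Fin 4) ∈ π'.sup id := by rw [hsup]; exact Finset.mem_univ _
  rw [Finset.mem_sup] at h3
  obtain ⟨C, hC, h3C⟩ := h3
  have hC0 : C ≠ {0} := by rintro rfl; revert h3C; decide
  have hC12 : C ≠ {1,2} := by rintro rfl; revert h3C; decide
  have hd0 := hdisj C hC _ h0 hC0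
  have hd12 := hdisj C hC _ h12 hC12
  have hC3 : C = {3} := by
    apply Finset.Subset.antisymm
    · intro x hx
      have hx0 : x ∉ ({0} : Finset (Fin 4)) := Finset.disjoint_left.mp hd0 hx
      have hx12 : x ∉ ({1,2} : Finset (Fin 4)) := Finset.disjoint_left.mp hd12 hx
      fin_cases x
      · exact absurd (by decide) hx0
      · exact absurd (by decide) hx12
      · exact absurd (by decide) hx12
      · decide
    · intro x hx
      have hx3 : x = 3 := Finset.mem_singleton.mp hx
      subst hx3; exact h3C
  subst hC3
  apply Finset.Subset.antisymm
  · intro D hD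
    by_contra hnotin
    simp only [Finset.mem_insert, Finset.mem_singleton] at hnotin
    push_neg at hnotin
    obtain ⟨hn0, hn12, hn3⟩ := hnotin
    obtain ⟨d, hd⟩ := hne D hD
    have hd0' := Finset.disjoint_left.mp (hdisj D hD _ h0 hn0) hd
    have hd12' := Finset.disjoint_left.mp (hdisj D hD _ h12 hn12) hd
    have hd3' := Finset.disjoint_left.mp (hdisj D hD _ hC hn3) hd
    fin_cases d
    · exact hd0' (by decide)
    · exact hd12' (by decide)
    · exact hd12' (by decide)
    · exact hd3' (by decide)
  · intro D hD
    simp only [Finset.mem_insert, Finset.mem_singleton] at hD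
    rcases hD with rfl | rfl | rfl
    · exact h0
    · exact h12
    · exact hC

/-- The concrete outcome: partition `{{0,3}, {1}, {2}}` with payoffs `(1, 1, 2, 3)`. -/
noncomputable def myOutcome : Outcome myG where
  part := {({0,3} : Finset (Fin 4)), {1}, {2}}
  ispart := myPartition _ (by decide) (by decide) (by decide)
  x := myx
  x_nonneg := by decide
  x_budget := by
    intro C hC
    simp only [Finset.mem_insert, Finset.mem_singleton] at hC
    rcases hC with rfl | rfl | rfl
    · rw [myG_value' _ _ (∅ : Finset (Finset (Fin 4))) (by decide) 0 (by decide)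
        (by norm_num) 4 (fun _ => rfl)]
      rw [Finset.sum_pair (by decide : (0 : Fin 4) ≠ 3)]; norm_num [myx, Matrix.cons_val_two, Matrix.cons_val_three, Matrix.vecHead, Matrix.vecTail]
    · rw [myG_value' _ _ {({0, 3} : Finset (Fin 4)), {2}} (by decide) 2 (by decide)
        (by norm_num) 1 (fun _ => rfl)]
      simp only [Finset.sum_singleton]; norm_num [myx]
    · rw [myG_value' _ _ {({0, 3} : Finset (Fin 4))} (by decide) 1 (by decide)
        (by norm_num) 2 (fun _ => rfl)]
      simp only [Finset.sum_singleton]; norm_num [myx, Matrix.cons_val_two, Matrix.cons_val_three, Matrix.vecHead, Matrix.vecTail]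
/-- There is a game and an outcome susceptible to an MCD but not to any SCD; hence
the set of outcomes susceptible to an SCD can be a strict subset of those susceptible
to an MCD. -/
theorem exists_MCD_susceptible_not_SCD_susceptible :
    ∃ (n k : ℕ) (G : kWVG n k) (ω : Outcome G),
      (∃ πD, IsMCD G ω.x πD) ∧ ¬ (∃ C, IsSCD G ω.x C) := by
  refine ⟨4, 3, myG, myOutcome, ?_, ?_⟩
  · -- an MCD exists: `{{0}, {1,2}}`
    refine ⟨{({0} : Finset (Fin 4)), {1,2}}, ⟨⟨{0}, by decide⟩, by decide,
      fun A hA B hB hne => Finset.disjoint_iff_inter_eq_empty.mpr (by revert hne hB hA; revert A B; decide)⟩, ?_⟩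
    intro π' hpart hsub
    have hfin : π' = {({0} : Finset (Fin 4)), {1,2}, {3}} :=
      completion_unique π' hpart (hsub (by decide)) (hsub (by decide))
    subst hfin
    intro C hC
    simp only [Finset.mem_insert, Finset.mem_singleton] at hC
    rcases hC with rfl | rfl
    · -- C = {0} : gets the second prize 2 > 1
      rw [show (myOutcome.x) = myx from rfl,
        myG_value' _ _ {({1, 2} : Finset (Fin 4))} (by decide) 1 (by decide) (by norm_num) 2 (fun _ => rfl)]
      simp only [Finset.sum_singleton]; norm_num [myx]
    · -- C = {1,2} : gets the first prize 4 > 3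
      rw [show (myOutcome.x) = myx from rfl,
        myG_value' _ _ (∅ : Finset (Finset (Fin 4))) (by decide) 0 (by decide) (by norm_num) 4 (fun _ => rfl)]
      rw [Finset.sum_pair (by decide : (1 : Fin 4) ≠ 2)]; norm_num [myx, Matrix.cons_val_two, Matrix.cons_val_three, Matrix.vecHead, Matrix.vecTail]
  · -- no SCD exists
    rintro ⟨C, hCne, hC⟩
    rw [show (myOutcome.x) = myx from rfl] at hC
    have hcases : C = ∅ ∨ C = {0} ∨ C = {1} ∨ C = {2} ∨ C = {3} ∨
        C = {0,1} ∨ C = {0,2} ∨ C = {0,3} ∨ C = {1,2} ∨ C = {1,3} ∨ C = {2,3} ∨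
        C = {0,1,2} ∨ C = {0,1,3} ∨ C = {0,2,3} ∨ C = {1,2,3} ∨ C = {0,1,2,3} := by
      clear hCne hC; revert C; decide
    rcases hcases with rfl | rfl | rfl | rfl | rfl | rfl | rfl | rfl | rfl | rfl | rfl |
      rfl | rfl | rfl | rfl | rfl
    · exact absurd hCne (by simp)
    · -- C = {0}
      refine no_scd_case _ {({0} : Finset (Fin 4)), {1}, {2}, {3}} (myPartition _ (by decide) (by decide) (by decide)) (by decide) ?_ hC
      rw [myG_value' _ _ {({1} : Finset (Fin 4)), {2}} (by decide) 2 (by decide) (by norm_num) 1 (fun _ => rfl)]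
      simp only [Finset.sum_singleton]; norm_num [myx]
    · -- C = {1}
      refine no_scd_case _ {({0, 3} : Finset (Fin 4)), {1}, {2}} (myPartition _ (by decide) (by decide) (by decide)) (by decide) ?_ hC
      rw [myG_value' _ _ {({0, 3} : Finset (Fin 4)), {2}} (by decide) 2 (by decide) (by norm_num) 1 (fun _ => rfl)]
      simp only [Finset.sum_singleton]; norm_num [myx]
    · -- C = {2}
      refine no_scd_case _ {({0} : Finset (Fin 4)), {1, 3}, {2}} (myPartition _ (by decide) (by decide) (by decide)) (by decide) ?_ hC
      rw [myG_value' _ _ {({1, 3} : Finset (Fin 4))} (by decide) 1 (by decide) (by norm_num) 2 (fun _ => rfl)]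
      simp only [Finset.sum_singleton]; norm_num [myx, Matrix.cons_val_two, Matrix.cons_val_three, Matrix.vecHead, Matrix.vecTail]
    · -- C = {3}
      refine no_scd_case _ {({0} : Finset (Fin 4)), {1}, {2}, {3}} (myPartition _ (by decide) (by decide) (by decide)) (by decide) ?_ hC
      rw [myG_value0 _ _ {({0} : Finset (Fin 4)), {1}, {2}} (by decide) 3 (by decide) (by norm_num)]
      simp only [Finset.sum_singleton]; norm_num [myx, Matrix.cons_val_two, Matrix.cons_val_three, Matrix.vecHead, Matrix.vecTail]
    · -- C = {0, 1}
      refine no_scd_case _ {({0, 1} : Finset (Fin 4)), {2, 3}} (myPartition _ (by decide) (by decide) (by decide)) (by decide) ?_ hC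
      rw [myG_value' _ _ {({2, 3} : Finset (Fin 4))} (by decide) 1 (by decide) (by norm_num) 2 (fun _ => rfl)]
      rw [Finset.sum_pair (by decide : (0 : Fin 4) ≠ 1)]; norm_num [myx]
    · -- C = {0, 2}
      refine no_scd_case _ {({0, 2} : Finset (Fin 4)), {1, 3}} (myPartition _ (by decide) (by decide) (by decide)) (by decide) ?_ hC
      rw [myG_value' _ _ {({1, 3} : Finset (Fin 4))} (by decide) 1 (by decide) (by norm_num) 2 (fun _ => rfl)]
      rw [Finset.sum_pair (by decide : (0 : Fin 4) ≠ 2)]; norm_num [myx, Matrix.cons_val_two, Matrix.cons_val_three, Matrix.vecHead, Matrix.vecTail]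
    · -- C = {0, 3}
      refine no_scd_case _ {({0, 3} : Finset (Fin 4)), {1}, {2}} (myPartition _ (by decide) (by decide) (by decide)) (by decide) ?_ hC
      rw [myG_value' _ _ (∅ : Finset (Finset (Fin 4))) (by decide) 0 (by decide) (by norm_num) 4 (fun _ => rfl)]
      rw [Finset.sum_pair (by decide : (0 : Fin 4) ≠ 3)]; norm_num [myx, Matrix.cons_val_two, Matrix.cons_val_three, Matrix.vecHead, Matrix.vecTail]
    · -- C = {1, 2}
      refine no_scd_case _ {({0, 3} : Finset (Fin 4)), {1, 2}} (myPartition _ (by decide) (by decide) (by decide)) (by decide) ?_ hC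
      rw [myG_value' _ _ {({0, 3} : Finset (Fin 4))} (by decide) 1 (by decide) (by norm_num) 2 (fun _ => rfl)]
      rw [Finset.sum_pair (by decide : (1 : Fin 4) ≠ 2)]; norm_num [myx, Matrix.cons_val_two, Matrix.cons_val_three, Matrix.vecHead, Matrix.vecTail]
    · -- C = {1, 3}
      refine no_scd_case _ {({0} : Finset (Fin 4)), {1, 3}, {2}} (myPartition _ (by decide) (by decide) (by decide)) (by decide) ?_ hC
      rw [myG_value' _ _ (∅ : Finset (Finset (Fin 4))) (by decide) 0 (by decide) (by norm_num) 4 (fun _ => rfl)]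
      rw [Finset.sum_pair (by decide : (1 : Fin 4) ≠ 3)]; norm_num [myx, Matrix.cons_val_two, Matrix.cons_val_three, Matrix.vecHead, Matrix.vecTail]
    · -- C = {2, 3}
      refine no_scd_case _ {({0} : Finset (Fin 4)), {1}, {2, 3}} (myPartition _ (by decide) (by decide) (by decide)) (by decide) ?_ hC
      rw [myG_value' _ _ (∅ : Finset (Finset (Fin 4))) (by decide) 0 (by decide) (by norm_num) 4 (fun _ => rfl)]
      rw [Finset.sum_pair (by decide : (2 : Fin 4) ≠ 3)]; norm_num [myx, Matrix.cons_val_two, Matrix.cons_val_three, Matrix.vecHead, Matrix.vecTail]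
    · -- C = {0, 1, 2}
      refine no_scd_case _ {({0, 1, 2} : Finset (Fin 4)), {3}} (myPartition _ (by decide) (by decide) (by decide)) (by decide) ?_ hC
      rw [myG_value' _ _ (∅ : Finset (Finset (Fin 4))) (by decide) 0 (by decide) (by norm_num) 4 (fun _ => rfl)]
      rw [show ({0, 1, 2} : Finset (Fin 4)) = insert 0 (insert 1 {2}) from rfl, Finset.sum_insert (by decide), Finset.sum_insert (by decide), Finset.sum_singleton]; norm_num [myx, Matrix.cons_val_two, Matrix.cons_val_three, Matrix.vecHead, Matrix.vecTail]
    · -- C = {0, 1, 3}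
      refine no_scd_case _ {({0, 1, 3} : Finset (Fin 4)), {2}} (myPartition _ (by decide) (by decide) (by decide)) (by decide) ?_ hC
      rw [myG_value' _ _ (∅ : Finset (Finset (Fin 4))) (by decide) 0 (by decide) (by norm_num) 4 (fun _ => rfl)]
      rw [show ({0, 1, 3} : Finset (Fin 4)) = insert 0 (insert 1 {3}) from rfl, Finset.sum_insert (by decide), Finset.sum_insert (by decide), Finset.sum_singleton]; norm_num [myx, Matrix.cons_val_two, Matrix.cons_val_three, Matrix.vecHead, Matrix.vecTail]
    · -- C = {0, 2, 3}
      refine no_scd_case _ {({0, 2, 3} : Finset (Fin 4)), {1}} (myPartition _ (by decide) (by decide) (by decide)) (by decide) ?_ hC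
      rw [myG_value' _ _ (∅ : Finset (Finset (Fin 4))) (by decide) 0 (by decide) (by norm_num) 4 (fun _ => rfl)]
      rw [show ({0, 2, 3} : Finset (Fin 4)) = insert 0 (insert 2 {3}) from rfl, Finset.sum_insert (by decide), Finset.sum_insert (by decide), Finset.sum_singleton]; norm_num [myx, Matrix.cons_val_two, Matrix.cons_val_three, Matrix.vecHead, Matrix.vecTail]
    · -- C = {1, 2, 3}
      refine no_scd_case _ {({0} : Finset (Fin 4)), {1, 2, 3}} (myPartition _ (by decide) (by decide) (by decide)) (by decide) ?_ hC
      rw [myG_value' _ _ (∅ : Finset (Finset (Fin 4))) (by decide) 0 (by decide) (by norm_num) 4 (fun _ => rfl)]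
      rw [show ({1, 2, 3} : Finset (Fin 4)) = insert 1 (insert 2 {3}) from rfl, Finset.sum_insert (by decide), Finset.sum_insert (by decide), Finset.sum_singleton]; norm_num [myx, Matrix.cons_val_two, Matrix.cons_val_three, Matrix.vecHead, Matrix.vecTail]
    · -- C = {0, 1, 2, 3}
      refine no_scd_case _ {({0, 1, 2, 3} : Finset (Fin 4))} (myPartition _ (by decide) (by decide) (by decide)) (by decide) ?_ hC
      rw [myG_value' _ _ (∅ : Finset (Finset (Fin 4))) (by decide) 0 (by decide) (by norm_num) 4 (fun _ => rfl)]
      rw [show ({0, 1, 2, 3} : Finset (Fin 4)) = Finset.univ from rfl, Fin.sum_univ_four]; norm_num [myx, Matrix.cons_val_two, Matrix.cons_val_three, Matrix.vecHead, Matrix.vecTail]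
end

section
/- There exist a k-Prize Weighted Voting Game G and an outcome ω of G such that ω is susceptible to an MCDT but not susceptible to any wMCD; hence for some game G the set of outcomes susceptible to a wMCD is a strict subset of the set of outcomes susceptible to an MCDT. -/
open Finset
open scoped Classical

variable {n k : ℕ}

namespace KWVGexample

/-- weights -/
def wN : Fin 4 → ℕ := ![3,2,1,1]
/-- tie-break scores -/
def cN : Fin 4 → ℕ := ![4,1,2,8]
/-- combined key: lexicographic (weight, tie-break score) -/
def keyN (A : Finset (Fin 4)) : ℕ := 16 * ∑ i ∈ A, wN i + ∑ i ∈ A, cN i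
/-- prizes -/
def pN : ℕ → ℕ := fun r => if r = 0 then 3 else if r < 3 then 2 else 0
/-- payoffs -/
def xN : Fin 4 → ℕ := ![3,2,0,2]
/-- computable coalition value -/
def cvN (π : Finset (Finset (Fin 4))) (C : Finset (Fin 4)) : ℕ :=
  pN (π.filter (fun C' => keyN C < keyN C')).card
/-- the deviating partition encoded by a labeling function -/
def pdOf (f : Fin 4 → Fin 5) : Finset (Finset (Fin 4)) :=
  (univ.filter (fun i => f i ≠ 0)).image (fun i => univ.filter (fun j => f j = f i))
/-- canonical completion of a deviating partition by singletons -/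
def pi0 (pd : Finset (Finset (Fin 4))) : Finset (Finset (Fin 4)) :=
  pd ∪ (univ \ pd.sup id).image (fun i => ({i} : Finset (Fin 4)))

lemma keyN_inj : ∀ A B : Finset (Fin 4), keyN A = keyN B → A = B := by decide

lemma cN_le : ∀ A : Finset (Fin 4), ∑ i ∈ A, cN i ≤ 15 := by decide

set_option maxRecDepth 100000 in
set_option maxHeartbeats 4000000 in
lemma main_neg : ∀ f : Fin 4 → Fin 5, (∀ i, (f i).val ≤ i.val + 1) →
    ¬ ((∀ C ∈ pdOf f, (∑ i ∈ C, xN i) ≤ cvN (pi0 (pdOf f)) C) ∧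
       (∃ C ∈ pdOf f, (∑ i ∈ C, xN i) < cvN (pi0 (pdOf f)) C)) := by decide

/-- the game -/
noncomputable def myG : kWVG 4 3 where
  w i := (wN i : ℚ)
  w_pos i := by fin_cases i <;> norm_num [wN]
  p j := (pN j.val : ℚ)
  p_pos j := by fin_cases j <;> norm_num [pN]
  p_desc j j' h := by fin_cases j <;> fin_cases j' <;> simp_all [pN] <;> norm_num
  k_pos := by norm_num
  k_le_n := by norm_num
  pref A B := keyN B < keyN A
  pref_irrefl A := lt_irrefl _
  pref_trans A B C h1 h2 := lt_trans h2 h1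
  pref_total A B h := Or.symm (lt_or_gt_of_ne (fun he => h (keyN_inj A B he)))
  pref_weight A B h := by
    have h' : ∑ i ∈ B, wN i < ∑ i ∈ A, wN i := by exact_mod_cast h
    have hc := cN_le B
    unfold keyN
    omega

lemma cv_eq (π : Finset (Finset (Fin 4))) (C : Finset (Fin 4)) :
    coalitionValue myG π C = (cvN π C : ℚ) := by
  have hf : (π.filter (fun C' => myG.pref C' C)) = π.filter (fun C' => keyN C < keyN C') := by
    ext A
    simp only [Finset.mem_filter]
    exact Iff.rfl
  unfold coalitionValue cvN
  simp only [hf]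
  by_cases h : (π.filter (fun C' => keyN C < keyN C')).card < 3
  · rw [dif_pos h]; rfl
  · rw [dif_neg h]
    have h0 : (π.filter (fun C' => keyN C < keyN C')).card ≠ 0 := by omega
    simp [pN, h0, h]

/-- the outcome partition -/
def myPart : Finset (Finset (Fin 4)) := {{0}, {1}, {2,3}}

/-- the outcome -/
noncomputable def myω : Outcome myG where
  part := myPart
  ispart := ⟨by decide, by decide, by decide⟩
  x i := (xN i : ℚ)
  x_nonneg i := by positivity
  x_budget := by
    intro C hC
    rw [cv_eq, ← Nat.cast_sum, Nat.cast_inj]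
    fin_cases hC <;> decide

lemma myω_x : myω.x = fun i => ((xN i : ℕ) : ℚ) := rfl

/-- the MCDT deviation -/
def myDev : Finset (Finset (Fin 4)) := {{1,3}, {2}}
def forcedPart : Finset (Finset (Fin 4)) := {{0},{1,3},{2}}

lemma forced (π' : Finset (Finset (Fin 4))) (h : IsPartition π' Finset.univ)
    (hsub : myDev ⊆ π') : π' = forcedPart := by
  obtain ⟨hne, hdisj, hsup⟩ := h
  have h13 : ({1,3} : Finset (Fin 4)) ∈ π' := hsub (by decide)
  have h2 : ({2} : Finset (Fin 4)) ∈ π' := hsub (by decide)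
  have key : ∀ (i : Fin 4) (A B : Finset (Fin 4)), A ∈ π' → B ∈ π' → i ∈ A → i ∈ B → A = B := by
    intro i A B hA hB hiA hiB
    by_contra hne'
    exact (Finset.disjoint_left.mp (hdisj A hA B hB hne') hiA) hiB
  have h0 : ∃ C ∈ π', (0 : Fin 4) ∈ C := by
    have h0u : (0 : Fin 4) ∈ π'.sup id := by rw [hsup]; exact Finset.mem_univ _
    simpa [Finset.mem_sup] using h0u
  obtain ⟨C0, hC0, h0C⟩ := h0
  have hC0eq : C0 = {0} := by
    apply Finset.Subset.antisymm
    · intro j hj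
      fin_cases j
      · decide
      · exact absurd ((key 1 C0 {1,3} hC0 h13 hj (by decide)) ▸ h0C) (by decide)
      · exact absurd ((key 2 C0 {2} hC0 h2 hj (by decide)) ▸ h0C) (by decide)
      · exact absurd ((key 3 C0 {1,3} hC0 h13 hj (by decide)) ▸ h0C) (by decide)
    · exact Finset.singleton_subset_iff.mpr h0C
  have hmem0 : ({0} : Finset (Fin 4)) ∈ π' := hC0eq ▸ hC0
  apply Finset.Subset.antisymm
  · intro B hB
    by_contra hBn
    have hBsub : B ⊆ ∅ := by
      intro j hj
      exfalso
      fin_cases j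
      · exact hBn ((key 0 B {0} hB hmem0 hj (by decide)) ▸ (by decide : ({0}:Finset (Fin 4)) ∈ forcedPart))
      · exact hBn ((key 1 B {1,3} hB h13 hj (by decide)) ▸ (by decide : ({1,3}:Finset (Fin 4)) ∈ forcedPart))
      · exact hBn ((key 2 B {2} hB h2 hj (by decide)) ▸ (by decide : ({2}:Finset (Fin 4)) ∈ forcedPart))
      · exact hBn ((key 3 B {1,3} hB h13 hj (by decide)) ▸ (by decide : ({1,3}:Finset (Fin 4)) ∈ forcedPart))
    rw [Finset.subset_empty] at hBsub
    exact Finset.not_nonempty_empty (hBsub ▸ hne B hB)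
  · intro B hB
    fin_cases hB
    · exact hmem0
    · exact h13
    · exact h2

lemma mcdt : IsMCDT myG myω.x myDev := by
  refine ⟨⟨by decide, by decide, by decide⟩, ?_⟩
  intro π' hp hsub
  rw [forced π' hp hsub]
  have hsup : myDev.sup id = ({1,2,3} : Finset (Fin 4)) := by decide
  rw [hsup, myω_x]
  simp only [cv_eq]
  rw [← Nat.cast_sum, ← Nat.cast_sum, Nat.cast_lt]
  decide

/-- labeling of a deviating partition: each deviator is labeled by (1 + minimum of its block) -/
noncomputable def labelOf (pd : Finset (Finset (Fin 4))) : Fin 4 → Fin 5 := fun i =>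
  if h : ∃ C ∈ pd, i ∈ C then Fin.succ ((h.choose).min' ⟨i, h.choose_spec.2⟩) else 0

lemma labelOf_le (pd : Finset (Finset (Fin 4))) (i : Fin 4) :
    (labelOf pd i).val ≤ i.val + 1 := by
  unfold labelOf
  by_cases h : ∃ C ∈ pd, i ∈ C
  · rw [dif_pos h, Fin.val_succ]
    have := Finset.min'_le _ i h.choose_spec.2
    exact Nat.add_le_add_right this 1
  · rw [dif_neg h]
    exact Nat.zero_le _

lemma no_wmcd : ¬ ∃ πD, IswMCD myG myω.x πD := by
  rintro ⟨pd, hdev, hall⟩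
  obtain ⟨hpdne, hblk, hdisj⟩ := hdev
  have uniq : ∀ {A B : Finset (Fin 4)}, A ∈ pd → B ∈ pd →
      ∀ {i : Fin 4}, i ∈ A → i ∈ B → A = B := by
    intro A B hA hB i hiA hiB
    by_contra hne'
    exact (Finset.disjoint_left.mp (hdisj A hA B hB hne') hiA) hiB
  set f := labelOf pd with hfdef
  have p2 : ∀ (i : Fin 4) (C : Finset (Fin 4)) (hC : C ∈ pd) (hiC : i ∈ C)
      (hne : C.Nonempty), f i = Fin.succ (C.min' hne) := by
    intro i C hC hiC hne
    have hex : ∃ C' ∈ pd, i ∈ C' := ⟨C, hC, hiC⟩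
    rw [hfdef]
    unfold labelOf
    rw [dif_pos hex]
    have hch : hex.choose = C := uniq hex.choose_spec.1 hC hex.choose_spec.2 hiC
    congr 1
    exact hch ▸ rfl
  have p0 : ∀ i : Fin 4, i ∉ pd.sup id → f i = 0 := by
    intro i hi
    rw [hfdef]
    unfold labelOf
    rw [dif_neg]
    rintro ⟨C, hC, hiC⟩
    exact hi (Finset.mem_sup.mpr ⟨C, hC, hiC⟩)
  have classEq : ∀ (i : Fin 4) (C : Finset (Fin 4)), C ∈ pd → i ∈ C →
      Finset.univ.filter (fun j => f j = f i) = C := by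
    intro i C hC hiC
    ext j
    simp only [Finset.mem_filter, Finset.mem_univ, true_and]
    constructor
    · intro hfj
      by_cases hjD : ∃ C' ∈ pd, j ∈ C'
      · obtain ⟨C', hC', hjC'⟩ := hjD
        rw [p2 j C' hC' hjC' ⟨j, hjC'⟩, p2 i C hC hiC ⟨i, hiC⟩] at hfj
        have hm : C'.min' ⟨j, hjC'⟩ = C.min' ⟨i, hiC⟩ := Fin.succ_inj.mp hfj
        have hmem : C.min' ⟨i, hiC⟩ ∈ C' := hm ▸ Finset.min'_mem C' ⟨j, hjC'⟩
        have hCC : C' = C := uniq hC' hC hmem (Finset.min'_mem C ⟨i, hiC⟩)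
        exact hCC ▸ hjC'
      · have hj0 : f j = 0 := by
          rw [hfdef]; unfold labelOf; rw [dif_neg hjD]
        rw [hj0, p2 i C hC hiC ⟨i, hiC⟩] at hfj
        exact absurd hfj.symm (Fin.succ_ne_zero _)
    · intro hjC
      rw [p2 j C hC hjC ⟨j, hjC⟩, p2 i C hC hiC ⟨i, hiC⟩]
  have p4 : pdOf f = pd := by
    apply Finset.Subset.antisymm
    · intro B hB
      obtain ⟨i, hifil, hBi⟩ := Finset.mem_image.mp hB
      have hfi : f i ≠ 0 := (Finset.mem_filter.mp hifil).2
      have hiD : ∃ C ∈ pd, i ∈ C := by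
        by_contra hno
        exact hfi (by rw [hfdef]; unfold labelOf; rw [dif_neg hno])
      obtain ⟨C, hC, hiC⟩ := hiD
      rw [← hBi, classEq i C hC hiC]
      exact hC
    · intro C hC
      obtain ⟨i, hiC⟩ := hblk C hC
      refine Finset.mem_image.mpr ⟨i, Finset.mem_filter.mpr ⟨Finset.mem_univ _, ?_⟩,
        classEq i C hC hiC⟩
      rw [p2 i C hC hiC ⟨i, hiC⟩]
      exact Fin.succ_ne_zero _
  have hpart : IsPartition (pi0 pd) Finset.univ := by
    refine ⟨?_, ?_, ?_⟩
    · intro C hC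
      rcases Finset.mem_union.mp hC with h | h
      · exact hblk C h
      · obtain ⟨i, -, rfl⟩ := Finset.mem_image.mp h
        exact Finset.singleton_nonempty i
    · intro A hA B hB hAB
      rcases Finset.mem_union.mp hA with hA' | hA' <;> rcases Finset.mem_union.mp hB with hB' | hB'
      · exact hdisj A hA' B hB' hAB
      · obtain ⟨i, hi, rfl⟩ := Finset.mem_image.mp hB'
        have hiD : i ∉ pd.sup id := (Finset.mem_sdiff.mp hi).2
        rw [Finset.disjoint_singleton_right]
        exact fun hiA => hiD (Finset.le_sup (f := id) hA' hiA)
      · obtain ⟨i, hi, rfl⟩ := Finset.mem_image.mp hA'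
        have hiD : i ∉ pd.sup id := (Finset.mem_sdiff.mp hi).2
        rw [Finset.disjoint_singleton_left]
        exact fun hiB => hiD (Finset.le_sup (f := id) hB' hiB)
      · obtain ⟨i, hi, rfl⟩ := Finset.mem_image.mp hA'
        obtain ⟨j, hj, rfl⟩ := Finset.mem_image.mp hB'
        rw [Finset.disjoint_singleton]
        exact fun h => hAB (by rw [h])
    · rw [pi0, Finset.sup_union, Finset.sup_image]
      have h1 : (Finset.univ \ pd.sup id).sup (id ∘ fun i => ({i} : Finset (Fin 4)))
          = Finset.univ \ pd.sup id := by
        ext a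
        simp [Finset.mem_sup]
      rw [h1]
      rw [Finset.sup_eq_union]
      exact Finset.union_sdiff_of_subset (Finset.subset_univ _)
  obtain ⟨hle, C, hC, hlt⟩ := hall (pi0 pd) hpart Finset.subset_union_left
  have hmn := main_neg f (labelOf_le pd)
  rw [p4] at hmn
  refine hmn ⟨?_, C, hC, ?_⟩
  · intro C' hC'
    have h' := hle C' hC'
    rw [cv_eq, myω_x] at h'
    rw [← Nat.cast_sum, Nat.cast_le] at h'
    exact h'
  · rw [cv_eq, myω_x] at hlt
    rw [← Nat.cast_sum, Nat.cast_lt] at hlt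
    exact hlt

end KWVGexample

/-- There is a game and an outcome susceptible to an MCDT but not to any wMCD; hence
the set of outcomes susceptible to a wMCD can be a strict subset of those susceptible
to an MCDT. -/
theorem exists_MCDT_susceptible_not_wMCD_susceptible :
    ∃ (n k : ℕ) (G : kWVG n k) (ω : Outcome G),
      (∃ πD, IsMCDT G ω.x πD) ∧ ¬ (∃ πD, IswMCD G ω.x πD) := by
  exact ⟨4, 3, KWVGexample.myG, KWVGexample.myω,
    ⟨KWVGexample.myDev, KWVGexample.mcdt⟩, KWVGexample.no_wmcd⟩
end

section
/- Let G be a k-WVG with 3 players and 2 prizes p = (R, 1) where R > 1, with players labeled so that {1} ≻ {2} ≻ {3}. If {1} ≻ {2,3}, then the outcome (π, x) with π = [{1} | {2} | {3}] and x = (R, 1, 0) is MCDT-stable (and hence also wMCD-stable, MCD-stable, and SCD-stable). -/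
open Finset
open scoped Classical

variable {n k : ℕ}

/-! ### Auxiliary lemmas -/

lemma kWVG.asymm' (G : kWVG n k) {A B : Finset (Fin n)} (h : G.pref A B) : ¬ G.pref B A :=
  fun h' => G.pref_irrefl A (G.pref_trans A B A h h')

lemma kWVG.pref_of_ssubset (G : kWVG n k) {A B : Finset (Fin n)} (h : A ⊂ B) :
    G.pref B A := by
  apply G.pref_weight
  obtain ⟨i, hiB, hiA⟩ := Finset.exists_of_ssubset h
  exact Finset.sum_lt_sum_of_subset h.subset hiB hiA (G.w_pos i) (fun j _ _ => (G.w_pos j).le)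

lemma cv_eq' {G : kWVG 3 2} {π : Finset (Finset (Fin 3))} {C : Finset (Fin 3)} (m : ℕ)
    (hm : (π.filter fun C' => G.pref C' C).card = m) (h2 : m < 2) :
    coalitionValue G π C = G.p ⟨m, h2⟩ := by
  subst hm; exact dif_pos h2

lemma cv_zero' {G : kWVG 3 2} {π : Finset (Finset (Fin 3))} {C : Finset (Fin 3)}
    (hm : 2 ≤ (π.filter fun C' => G.pref C' C).card) :
    coalitionValue G π C = 0 := dif_neg (by omega)

lemma IswMCD.toMCDT' {G : kWVG n k} {x : Fin n → ℚ} {πD : Finset (Finset (Fin n))}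
    (h : IswMCD G x πD) : IsMCDT G x πD := by
  obtain ⟨⟨hne, hnem, hdisj⟩, h2⟩ := h
  refine ⟨⟨hne, hnem, hdisj⟩, fun π' hπ' hsub => ?_⟩
  obtain ⟨hle, C0, hC0, hltC⟩ := h2 π' hπ' hsub
  have hD : ∑ i ∈ πD.sup id, x i = ∑ C ∈ πD, ∑ i ∈ C, x i := by
    rw [Finset.sup_eq_biUnion]
    exact Finset.sum_biUnion (fun A hA B hB hAB =>
      hdisj A (Finset.mem_coe.mp hA) B (Finset.mem_coe.mp hB) hAB)
  rw [hD]
  exact Finset.sum_lt_sum hle ⟨C0, hC0, hltC⟩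

lemma IsMCD.towMCD' {G : kWVG n k} {x : Fin n → ℚ} {πD : Finset (Finset (Fin n))}
    (h : IsMCD G x πD) : IswMCD G x πD := by
  obtain ⟨hd, h2⟩ := h
  refine ⟨hd, fun π' hπ' hsub => ⟨fun C hC => (h2 π' hπ' hsub C hC).le, ?_⟩⟩
  obtain ⟨C, hC⟩ := hd.1
  exact ⟨C, hC, h2 π' hπ' hsub C hC⟩

lemma IsSCD.toMCD' {G : kWVG n k} {x : Fin n → ℚ} {C : Finset (Fin n)}
    (h : IsSCD G x C) : IsMCD G x {C} := by
  obtain ⟨hCne, h2⟩ := h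
  refine ⟨⟨Finset.singleton_nonempty C, ?_, ?_⟩, ?_⟩
  · intro C' hC'; rw [Finset.mem_singleton] at hC'; subst hC'; exact hCne
  · intro A hA B hB hAB
    rw [Finset.mem_singleton] at hA hB; subst hA; subst hB; exact absurd rfl hAB
  · intro π' hπ' hsub C' hC'; rw [Finset.mem_singleton] at hC'; subst hC'
    exact h2 π' hπ' (hsub (Finset.mem_singleton_self C'))

set_option maxRecDepth 10000 in
set_option synthInstance.maxHeartbeats 1000000 in
set_option synthInstance.maxSize 1024 in
lemma devEnum : ∀ πD : Finset (Finset (Fin 3)),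
    (πD ≠ ∅ ∧ (∀ C ∈ πD, C ≠ ∅) ∧ (∀ A ∈ πD, ∀ B ∈ πD, A ≠ B → A ∩ B = ∅)) →
    πD = {{0}} ∨ πD = {{1}} ∨ πD = {{2}} ∨
    πD = {{0,1}} ∨ πD = {{0,2}} ∨ πD = {{1,2}} ∨ πD = {{0,1,2}} ∨
    πD = {{0},{1}} ∨ πD = {{0},{2}} ∨ πD = {{1},{2}} ∨
    πD = {{0},{1,2}} ∨ πD = {{1},{0,2}} ∨ πD = {{2},{0,1}} ∨
    πD = {{0},{1},{2}} := by decide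

/-- In a 3-player 2-prize game with prizes `(R, 1)`, `R > 1`, players labelled in
`≻`-descending order, if `{1} ≻ {2,3}` then the outcome with partition
`[{1} | {2} | {3}]` and payoffs `(R, 1, 0)` is MCDT-stable (hence also wMCD-, MCD-
and SCD-stable). -/
theorem three_player_two_prize_case1_stable (G : kWVG 3 2) (R : ℚ) (hR : 1 < R)
    (hp0 : G.p 0 = R) (hp1 : G.p 1 = 1)
    (h12 : G.pref {0} {1}) (h23 : G.pref {1} {2})
    (h : G.pref {0} {1, 2})
    (ω : Outcome G) (hpart : ω.part = {{0}, {1}, {2}}) (hx : ω.x = ![R, 1, 0]) :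
    MCDTStable G ω ∧ wMCDStable G ω ∧ MCDStable G ω ∧ SCDStable G ω := by
  classical
  -- basic preference facts
  have a01 : G.pref {0} {1} := h12
  have a12 : G.pref {1} {2} := h23
  have a02 : G.pref {0} {2} := G.pref_trans _ _ _ a01 a12
  have a0_12 : G.pref {0} {1,2} := h
  have a01_2 : G.pref {0,1} {2} :=
    G.pref_trans _ _ _ (G.pref_of_ssubset (by decide)) a12
  have a02_1 : G.pref {0,2} {1} :=
    G.pref_trans _ _ _ (G.pref_of_ssubset (by decide)) a01
  -- the five completed partitions
  have hT1 : IsPartition ({{0},{1},{2}} : Finset (Finset (Fin 3))) Finset.univ := by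
    refine ⟨?_, ?_, ?_⟩ <;> decide
  have hT2 : IsPartition ({{0,1},{2}} : Finset (Finset (Fin 3))) Finset.univ := by
    refine ⟨?_, ?_, ?_⟩ <;> decide
  have hT3 : IsPartition ({{0,2},{1}} : Finset (Finset (Fin 3))) Finset.univ := by
    refine ⟨?_, ?_, ?_⟩ <;> decide
  have hT4 : IsPartition ({{0},{1,2}} : Finset (Finset (Fin 3))) Finset.univ := by
    refine ⟨?_, ?_, ?_⟩ <;> decide
  have hT5 : IsPartition ({{0,1,2}} : Finset (Finset (Fin 3))) Finset.univ := by
    refine ⟨?_, ?_, ?_⟩ <;> decide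
  -- coalition values in the completed partitions
  have v10 : coalitionValue G {{0},{1},{2}} {0} = R := by
    rw [cv_eq' 0 ?_ (by norm_num)]
    · exact hp0
    rw [Finset.filter_eq_empty_iff.mpr ?_, Finset.card_empty]
    intro A hA
    simp only [Finset.mem_insert, Finset.mem_singleton] at hA
    rcases hA with rfl | rfl | rfl
    · exact G.pref_irrefl _
    · exact G.asymm' a01
    · exact G.asymm' a02
  have f11 : ({{0},{1},{2}} : Finset (Finset (Fin 3))).filter
      (fun C' => G.pref C' {1}) = {{0}} := by
    ext A
    simp only [Finset.mem_filter, Finset.mem_insert, Finset.mem_singleton]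
    constructor
    · rintro ⟨rfl | rfl | rfl, h2⟩
      · rfl
      · exact absurd h2 (G.pref_irrefl _)
      · exact absurd h2 (G.asymm' a12)
    · rintro rfl; exact ⟨Or.inl rfl, a01⟩
  have v11 : coalitionValue G {{0},{1},{2}} {1} = 1 := by
    rw [cv_eq' 1 (by rw [f11]; rfl) (by norm_num)]; exact hp1
  have f12 : ({{0},{1},{2}} : Finset (Finset (Fin 3))).filter
      (fun C' => G.pref C' {2}) = {{0},{1}} := by
    ext A
    simp only [Finset.mem_filter, Finset.mem_insert, Finset.mem_singleton]
    constructor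
    · rintro ⟨rfl | rfl | rfl, h2⟩
      · exact Or.inl rfl
      · exact Or.inr rfl
      · exact absurd h2 (G.pref_irrefl _)
    · rintro (rfl | rfl)
      · exact ⟨Or.inl rfl, a02⟩
      · exact ⟨Or.inr (Or.inl rfl), a12⟩
  have v12 : coalitionValue G {{0},{1},{2}} {2} = 0 :=
    cv_zero' (by rw [f12]; decide)
  have v2a : coalitionValue G {{0,1},{2}} {0,1} = R := by
    rw [cv_eq' 0 ?_ (by norm_num)]
    · exact hp0
    rw [Finset.filter_eq_empty_iff.mpr ?_, Finset.card_empty]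
    intro A hA
    simp only [Finset.mem_insert, Finset.mem_singleton] at hA
    rcases hA with rfl | rfl
    · exact G.pref_irrefl _
    · exact G.asymm' a01_2
  have f2b : ({{0,1},{2}} : Finset (Finset (Fin 3))).filter
      (fun C' => G.pref C' {2}) = {{0,1}} := by
    ext A
    simp only [Finset.mem_filter, Finset.mem_insert, Finset.mem_singleton]
    constructor
    · rintro ⟨rfl | rfl, h2⟩
      · rfl
      · exact absurd h2 (G.pref_irrefl _)
    · rintro rfl; exact ⟨Or.inl rfl, a01_2⟩
  have v2b : coalitionValue G {{0,1},{2}} {2} = 1 := by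
    rw [cv_eq' 1 (by rw [f2b]; rfl) (by norm_num)]; exact hp1
  have v3a : coalitionValue G {{0,2},{1}} {0,2} = R := by
    rw [cv_eq' 0 ?_ (by norm_num)]
    · exact hp0
    rw [Finset.filter_eq_empty_iff.mpr ?_, Finset.card_empty]
    intro A hA
    simp only [Finset.mem_insert, Finset.mem_singleton] at hA
    rcases hA with rfl | rfl
    · exact G.pref_irrefl _
    · exact G.asymm' a02_1
  have f3b : ({{0,2},{1}} : Finset (Finset (Fin 3))).filter
      (fun C' => G.pref C' {1}) = {{0,2}} := by
    ext A
    simp only [Finset.mem_filter, Finset.mem_insert, Finset.mem_singleton]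
    constructor
    · rintro ⟨rfl | rfl, h2⟩
      · rfl
      · exact absurd h2 (G.pref_irrefl _)
    · rintro rfl; exact ⟨Or.inl rfl, a02_1⟩
  have v3b : coalitionValue G {{0,2},{1}} {1} = 1 := by
    rw [cv_eq' 1 (by rw [f3b]; rfl) (by norm_num)]; exact hp1
  have v4a : coalitionValue G {{0},{1,2}} {0} = R := by
    rw [cv_eq' 0 ?_ (by norm_num)]
    · exact hp0
    rw [Finset.filter_eq_empty_iff.mpr ?_, Finset.card_empty]
    intro A hA
    simp only [Finset.mem_insert, Finset.mem_singleton] at hA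
    rcases hA with rfl | rfl
    · exact G.pref_irrefl _
    · exact G.asymm' a0_12
  have f4b : ({{0},{1,2}} : Finset (Finset (Fin 3))).filter
      (fun C' => G.pref C' {1,2}) = {{0}} := by
    ext A
    simp only [Finset.mem_filter, Finset.mem_insert, Finset.mem_singleton]
    constructor
    · rintro ⟨rfl | rfl, h2⟩
      · rfl
      · exact absurd h2 (G.pref_irrefl _)
    · rintro rfl; exact ⟨Or.inl rfl, a0_12⟩
  have v4b : coalitionValue G {{0},{1,2}} {1,2} = 1 := by
    rw [cv_eq' 1 (by rw [f4b]; rfl) (by norm_num)]; exact hp1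
  have v5 : coalitionValue G {{0,1,2}} {0,1,2} = R := by
    rw [cv_eq' 0 ?_ (by norm_num)]
    · exact hp0
    rw [Finset.filter_eq_empty_iff.mpr ?_, Finset.card_empty]
    intro A hA
    simp only [Finset.mem_singleton] at hA
    subst hA
    exact G.pref_irrefl _
  -- payoff sums
  have s0 : ∑ i ∈ ({0} : Finset (Fin 3)), ω.x i = R := by
    rw [Finset.sum_singleton, hx]; rfl
  have s1 : ∑ i ∈ ({1} : Finset (Fin 3)), ω.x i = 1 := by
    rw [Finset.sum_singleton, hx]; rfl
  have s2 : ∑ i ∈ ({2} : Finset (Fin 3)), ω.x i = 0 := by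
    rw [Finset.sum_singleton, hx]; rfl
  have s01 : ∑ i ∈ ({0,1} : Finset (Fin 3)), ω.x i = R + 1 := by
    rw [Finset.sum_pair (by decide), hx]; rfl
  have s02 : ∑ i ∈ ({0,2} : Finset (Fin 3)), ω.x i = R := by
    rw [Finset.sum_pair (by decide), hx]; show R + 0 = R; ring
  have s12 : ∑ i ∈ ({1,2} : Finset (Fin 3)), ω.x i = 1 := by
    rw [Finset.sum_pair (by decide), hx]; show (1:ℚ) + 0 = 1; ring
  have s012 : ∑ i ∈ ({0,1,2} : Finset (Fin 3)), ω.x i = R + 1 := by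
    rw [Finset.sum_insert (by decide), Finset.sum_pair (by decide), hx]
    show R + (1 + 0) = R + 1; ring
  -- MCDT-stability
  have hMCDT : MCDTStable G ω := by
    rintro ⟨πD, ⟨hne, hnem, hdisj⟩, hlt⟩
    have h1 : πD ≠ ∅ := hne.ne_empty
    have h2 : ∀ C ∈ πD, C ≠ ∅ := fun C hC => (hnem C hC).ne_empty
    have h3 : ∀ A ∈ πD, ∀ B ∈ πD, A ≠ B → A ∩ B = ∅ := fun A hA B hB hAB =>
      Finset.disjoint_iff_inter_eq_empty.mp (hdisj A hA B hB hAB)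
    rcases devEnum πD ⟨h1, h2, h3⟩ with
      rfl | rfl | rfl | rfl | rfl | rfl | rfl | rfl | rfl | rfl | rfl | rfl | rfl | rfl
    · have H := hlt _ hT1 (by decide)
      rw [show (({{0}} : Finset (Finset (Fin 3))).sup id) = {0} by decide, s0,
        Finset.sum_singleton, v10] at H
      linarith
    · have H := hlt _ hT1 (by decide)
      rw [show (({{1}} : Finset (Finset (Fin 3))).sup id) = {1} by decide, s1,
        Finset.sum_singleton, v11] at H
      linarith
    · have H := hlt _ hT1 (by decide)
      rw [show (({{2}} : Finset (Finset (Fin 3))).sup id) = {2} by decide, s2,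
        Finset.sum_singleton, v12] at H
      linarith
    · have H := hlt _ hT2 (by decide)
      rw [show (({{0,1}} : Finset (Finset (Fin 3))).sup id) = {0,1} by decide, s01,
        Finset.sum_singleton, v2a] at H
      linarith
    · have H := hlt _ hT3 (by decide)
      rw [show (({{0,2}} : Finset (Finset (Fin 3))).sup id) = {0,2} by decide, s02,
        Finset.sum_singleton, v3a] at H
      linarith
    · have H := hlt _ hT4 (by decide)
      rw [show (({{1,2}} : Finset (Finset (Fin 3))).sup id) = {1,2} by decide, s12,
        Finset.sum_singleton, v4b] at H
      linarith
    · have H := hlt _ hT5 (by decide)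
      rw [show (({{0,1,2}} : Finset (Finset (Fin 3))).sup id) = {0,1,2} by decide, s012,
        Finset.sum_singleton, v5] at H
      linarith
    · have H := hlt _ hT1 (by decide)
      rw [show (({{0},{1}} : Finset (Finset (Fin 3))).sup id) = {0,1} by decide, s01,
        Finset.sum_pair (by decide), v10, v11] at H
      linarith
    · have H := hlt _ hT1 (by decide)
      rw [show (({{0},{2}} : Finset (Finset (Fin 3))).sup id) = {0,2} by decide, s02,
        Finset.sum_pair (by decide), v10, v12] at H
      linarith
    · have H := hlt _ hT1 (by decide)
      rw [show (({{1},{2}} : Finset (Finset (Fin 3))).sup id) = {1,2} by decide, s12,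
        Finset.sum_pair (by decide), v11, v12] at H
      linarith
    · have H := hlt _ hT4 (by decide)
      rw [show (({{0},{1,2}} : Finset (Finset (Fin 3))).sup id) = {0,1,2} by decide, s012,
        Finset.sum_pair (by decide), v4a, v4b] at H
      linarith
    · have H := hlt _ hT3 (by decide)
      rw [show (({{1},{0,2}} : Finset (Finset (Fin 3))).sup id) = {0,1,2} by decide, s012,
        Finset.sum_pair (by decide), v3b, v3a] at H
      linarith
    · have H := hlt _ hT2 (by decide)
      rw [show (({{2},{0,1}} : Finset (Finset (Fin 3))).sup id) = {0,1,2} by decide, s012,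
        Finset.sum_pair (by decide), v2b, v2a] at H
      linarith
    · have H := hlt _ hT1 (by decide)
      rw [show (({{0},{1},{2}} : Finset (Finset (Fin 3))).sup id) = {0,1,2} by decide, s012,
        Finset.sum_insert (by decide), Finset.sum_pair (by decide), v10, v11, v12] at H
      linarith
  refine ⟨hMCDT, ?_, ?_, ?_⟩
  · rintro ⟨πD, hd⟩; exact hMCDT ⟨πD, hd.toMCDT'⟩
  · rintro ⟨πD, hd⟩; exact hMCDT ⟨πD, hd.towMCD'.toMCDT'⟩
  · rintro ⟨C, hC⟩; exact hMCDT ⟨{C}, hC.toMCD'.towMCD'.toMCDT'⟩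
end

section
/- Let G be a k-WVG with 3 players and 2 prizes p = (R, 1) where R > 1, with players labeled so that {1} ≻ {2} ≻ {3}. If {1} ≻ {2,3}, then every SCD-stable outcome of G has payoff vector x = (R, 1, 0). -/
open Finset
open scoped Classical

variable {n k : ℕ}

lemma pref_asymm (G : kWVG n k) {A B : Finset (Fin n)} (hAB : G.pref A B) :
    ¬ G.pref B A := fun h' => G.pref_irrefl A (G.pref_trans A B A hAB h')

lemma aux_sub12 : ∀ C : Finset (Fin 3), (0:Fin 3) ∉ C → C.Nonempty →
    C = {1} ∨ C = {2} ∨ C = {1,2} := by decide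

lemma aux_sub02 : ∀ C : Finset (Fin 3), (1:Fin 3) ∉ C → (0:Fin 3) ∈ C →
    C = {0} ∨ C = {0,2} := by decide

lemma aux_sub2 : ∀ C : Finset (Fin 3), (0:Fin 3) ∉ C → (1:Fin 3) ∉ C → C.Nonempty →
    C = {2} := by decide

/-- In any full partition containing `{0}`, the coalition `{0}` ranks first. -/
lemma value_of_singleton_zero (G : kWVG 3 2) (h12 : G.pref {0} {1}) (h23 : G.pref {1} {2})
    (h : G.pref {0} {1, 2}) (π : Finset (Finset (Fin 3)))
    (hπ : IsPartition π Finset.univ) (hmem : {0} ∈ π) :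
    coalitionValue G π {0} = G.p 0 := by
  obtain ⟨hne, hdisj, hsup⟩ := hπ
  have hfilt : π.filter (fun C' => G.pref C' ({0} : Finset (Fin 3))) = ∅ := by
    apply Finset.filter_eq_empty_iff.mpr
    intro C hC hpC
    have hCne : C ≠ {0} := fun hEq => G.pref_irrefl _ (hEq ▸ hpC)
    have hd : Disjoint C ({0} : Finset (Fin 3)) := hdisj C hC _ hmem hCne
    have h0C : (0:Fin 3) ∉ C := fun h0 =>
      (Finset.disjoint_left.mp hd h0) (Finset.mem_singleton_self 0)
    rcases aux_sub12 C h0C (hne C hC) with rfl | rfl | rfl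
    · exact pref_asymm G h12 hpC
    · exact pref_asymm G (G.pref_trans _ _ _ h12 h23) hpC
    · exact pref_asymm G h hpC
  rw [coalitionValue, hfilt]
  simp

/-- In any full partition containing `{1}`, the coalition `{1}` ranks second. -/
lemma value_of_singleton_one (G : kWVG 3 2) (h12 : G.pref {0} {1}) (h23 : G.pref {1} {2})
    (π : Finset (Finset (Fin 3)))
    (hπ : IsPartition π Finset.univ) (hmem : {1} ∈ π) :
    coalitionValue G π {1} = G.p 1 := by
  obtain ⟨hne, hdisj, hsup⟩ := hπ
  -- the coalition containing player 0
  have h0 : (0:Fin 3) ∈ π.sup id := by rw [hsup]; exact Finset.mem_univ _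
  obtain ⟨C0, hC0π, h0C0⟩ := Finset.mem_sup.mp h0
  have hC0ne1 : C0 ≠ {1} := by
    intro hEq; rw [hEq] at h0C0; exact absurd h0C0 (by decide)
  have hd : Disjoint C0 ({1} : Finset (Fin 3)) := hdisj C0 hC0π _ hmem hC0ne1
  have h1C0 : (1:Fin 3) ∉ C0 := fun h1 =>
    (Finset.disjoint_left.mp hd h1) (Finset.mem_singleton_self 1)
  -- weight facts
  have hw01 : G.w 1 ≤ G.w 0 := by
    by_contra hlt
    push_neg at hlt
    have : G.pref {1} {0} := by
      apply G.pref_weight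
      simpa using hlt
    exact pref_asymm G h12 this
  have hprefC0 : G.pref C0 {1} := by
    rcases aux_sub02 C0 h1C0 h0C0 with rfl | rfl
    · exact h12
    · apply G.pref_weight
      have hs : (∑ i ∈ ({0,2} : Finset (Fin 3)), G.w i) = G.w 0 + G.w 2 := by
        rw [Finset.sum_pair (by decide : (0:Fin 3) ≠ 2)]
      rw [hs, Finset.sum_singleton]
      have := G.w_pos 2
      linarith
  have hfilt : π.filter (fun C' => G.pref C' ({1} : Finset (Fin 3))) = {C0} := by
    apply Finset.ext
    intro C
    simp only [Finset.mem_filter, Finset.mem_singleton]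
    constructor
    · rintro ⟨hCπ, hpC⟩
      by_contra hCne
      have hCne1 : C ≠ {1} := fun hEq => G.pref_irrefl _ (hEq ▸ hpC)
      have hd1 : Disjoint C ({1} : Finset (Fin 3)) := hdisj C hCπ _ hmem hCne1
      have h1C : (1:Fin 3) ∉ C := fun h1 =>
        (Finset.disjoint_left.mp hd1 h1) (Finset.mem_singleton_self 1)
      have hdC0 : Disjoint C C0 := hdisj C hCπ _ hC0π hCne
      have h0C : (0:Fin 3) ∉ C := fun h0' => (Finset.disjoint_left.mp hdC0 h0') h0C0
      have : C = {2} := aux_sub2 C h0C h1C (hne C hCπ)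
      subst this
      exact pref_asymm G h23 hpC
    · rintro rfl
      exact ⟨hC0π, hprefC0⟩
  rw [coalitionValue, hfilt]
  simp

/-- The ranks of distinct coalitions of a partition are distinct. -/
lemma rank_injOn (G : kWVG n k) (π : Finset (Finset (Fin n))) {A B : Finset (Fin n)}
    (hA : A ∈ π) (hB : B ∈ π) (hne : A ≠ B) :
    (π.filter (fun C' => G.pref C' A)).card ≠ (π.filter (fun C' => G.pref C' B)).card := by
  have key : ∀ X Y : Finset (Fin n), X ∈ π → G.pref X Y →
      (π.filter (fun C' => G.pref C' X)).card < (π.filter (fun C' => G.pref C' Y)).card := by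
    intro X Y hX hXY
    apply Finset.card_lt_card
    constructor
    · intro C hC
      rw [Finset.mem_filter] at hC ⊢
      exact ⟨hC.1, G.pref_trans _ _ _ hC.2 hXY⟩
    · intro hsub
      have : X ∈ π.filter (fun C' => G.pref C' Y) := Finset.mem_filter.mpr ⟨hX, hXY⟩
      have := Finset.mem_filter.mp (hsub this)
      exact G.pref_irrefl X this.2
  rcases G.pref_total A B hne with hp | hp
  · exact Nat.ne_of_lt (key A B hA hp)
  · exact Nat.ne_of_lt' (key B A hB hp)

/-- The total value distributed by a 2-prize partition is at most `p 0 + p 1`. -/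
lemma sum_values_le (G : kWVG n 2) (π : Finset (Finset (Fin n))) :
    (∑ C ∈ π, coalitionValue G π C) ≤ G.p 0 + G.p 1 := by
  classical
  set f : Finset (Fin n) → ℕ := fun C => (π.filter (fun C' => G.pref C' C)).card with hf
  set S : Finset (Finset (Fin n)) := π.filter (fun C => f C < 2) with hS
  set g : Finset (Fin n) → Fin 2 := fun C => if h : f C < 2 then ⟨f C, h⟩ else 0 with hg
  have h1 : (∑ C ∈ π, coalitionValue G π C) = ∑ C ∈ S, coalitionValue G π C := by
    refine (Finset.sum_subset (Finset.filter_subset _ _) ?_).symm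
    intro C hC hCS
    have : ¬ f C < 2 := by
      intro hlt
      exact hCS (Finset.mem_filter.mpr ⟨hC, hlt⟩)
    rw [coalitionValue, dif_neg this]
  have h2 : (∑ C ∈ S, coalitionValue G π C) = ∑ C ∈ S, G.p (g C) := by
    apply Finset.sum_congr rfl
    intro C hC
    have hlt : f C < 2 := (Finset.mem_filter.mp hC).2
    rw [coalitionValue, dif_pos hlt, hg]
    beta_reduce
    rw [dif_pos hlt]
  have hinj : ∀ x ∈ S, ∀ y ∈ S, g x = g y → x = y := by
    intro x hx y hy hxy
    by_contra hne
    have hx' := (Finset.mem_filter.mp hx)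
    have hy' := (Finset.mem_filter.mp hy)
    rw [hg] at hxy
    simp only [dif_pos hx'.2, dif_pos hy'.2] at hxy
    exact rank_injOn G π hx'.1 hy'.1 hne (congrArg Fin.val hxy)
  have h3 : (∑ C ∈ S, G.p (g C)) = ∑ j ∈ S.image g, G.p j :=
    (Finset.sum_image hinj).symm
  have h4 : (∑ j ∈ S.image g, G.p j) ≤ ∑ j : Fin 2, G.p j := by
    apply Finset.sum_le_sum_of_subset_of_nonneg (Finset.subset_univ _)
    intro j _ _
    exact (G.p_pos j).le
  rw [h1, h2, h3]
  calc (∑ j ∈ S.image g, G.p j) ≤ ∑ j : Fin 2, G.p j := h4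
    _ = G.p 0 + G.p 1 := by rw [Fin.sum_univ_two]

/-- In a 3-player 2-prize game with prizes `(R, 1)`, `R > 1`, players labelled in
`≻`-descending order, if `{1} ≻ {2,3}` then every SCD-stable outcome has payoff
vector `(R, 1, 0)`. -/
theorem three_player_two_prize_case1_unique_payoff (G : kWVG 3 2) (R : ℚ) (hR : 1 < R)
    (hp0 : G.p 0 = R) (hp1 : G.p 1 = 1)
    (h12 : G.pref {0} {1}) (h23 : G.pref {1} {2})
    (h : G.pref {0} {1, 2}) :
    ∀ ω : Outcome G, SCDStable G ω → ω.x = ![R, 1, 0] := by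
  intro ω hstable
  -- (A) x 0 ≥ R
  have hx0 : R ≤ ω.x 0 := by
    by_contra hlt
    push_neg at hlt
    apply hstable
    refine ⟨{0}, Finset.singleton_nonempty _, ?_⟩
    intro π' hπ' hmem
    rw [value_of_singleton_zero G h12 h23 h π' hπ' hmem, hp0]
    simpa using hlt
  -- (B) x 1 ≥ 1
  have hx1 : 1 ≤ ω.x 1 := by
    by_contra hlt
    push_neg at hlt
    apply hstable
    refine ⟨{1}, Finset.singleton_nonempty _, ?_⟩
    intro π' hπ' hmem
    rw [value_of_singleton_one G h12 h23 π' hπ' hmem, hp1]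
    simpa using hlt
  -- (C) total payoff ≤ R + 1
  have hx2 : 0 ≤ ω.x 2 := ω.x_nonneg 2
  have htot : ω.x 0 + ω.x 1 + ω.x 2 ≤ R + 1 := by
    obtain ⟨hne, hdisj, hsup⟩ := ω.ispart
    have hbiU : ω.part.biUnion id = Finset.univ := by
      rw [← Finset.sup_eq_biUnion]; exact hsup
    have hpd : (ω.part : Set (Finset (Fin 3))).PairwiseDisjoint id := by
      intro A hA B hB hAB
      exact hdisj A hA B hB hAB
    have h1 : (∑ i : Fin 3, ω.x i) = ∑ C ∈ ω.part, ∑ i ∈ C, ω.x i := by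
      rw [← hbiU, Finset.sum_biUnion hpd]
      rfl
    have h2 : (∑ C ∈ ω.part, ∑ i ∈ C, ω.x i) = ∑ C ∈ ω.part, coalitionValue G ω.part C :=
      Finset.sum_congr rfl (fun C hC => ω.x_budget C hC)
    have h3 := sum_values_le G ω.part
    have h4 : (∑ i : Fin 3, ω.x i) = ω.x 0 + ω.x 1 + ω.x 2 := Fin.sum_univ_three _
    rw [h4] at h1
    rw [h1, h2]
    rw [hp0, hp1] at h3
    exact h3
  have e0 : ω.x 0 = R := by linarith
  have e1 : ω.x 1 = 1 := by linarith
  have e2 : ω.x 2 = 0 := by linarith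
  funext i
  fin_cases i <;> simp [e0, e1, e2]
end

section
/- Let G be a k-WVG with 3 players and 2 prizes p = (R, 1) where 1 < R ≤ 2, with players labeled so that {1} ≻ {2} ≻ {3}. If {2,3} ≻ {1}, then the outcome (π, x) with π = [{2,3} | {1}] and x = (1, 1, R−1) is MCD-stable (and hence SCD-stable). -/
open Finset
open scoped Classical

variable {n k : ℕ}

lemma fin3_subsets (C : Finset (Fin 3)) :
    C = ∅ ∨ C = {0} ∨ C = {1} ∨ C = {2} ∨ C = {0,1} ∨ C = {0,2} ∨ C = {1,2} ∨
      C = Finset.univ := by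
  revert C; decide

lemma coalitionValue_eq {n k : ℕ} (G : kWVG n k) (π : Finset (Finset (Fin n)))
    (C : Finset (Fin n)) (m : ℕ) (hm : m < k)
    (hf : (π.filter (fun C' => G.pref C' C)).card = m) :
    coalitionValue G π C = G.p ⟨m, hm⟩ := by
  rw [coalitionValue]
  simp only [hf]
  rw [dif_pos hm]

lemma coalitionValue_eq_zero {n k : ℕ} (G : kWVG n k) (π : Finset (Finset (Fin n)))
    (C : Finset (Fin n)) (hf : ¬ (π.filter (fun C' => G.pref C' C)).card < k) :
    coalitionValue G π C = 0 := by
  rw [coalitionValue, dif_neg hf]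

/-- In a 3-player 2-prize game with prizes `(R, 1)`, `1 < R ≤ 2`, players labelled in
`≻`-descending order, if `{2,3} ≻ {1}` then the outcome with partition `[{2,3} | {1}]`
and payoffs `(1, 1, R-1)` is MCD-stable (hence also SCD-stable). -/
theorem three_player_two_prize_case2_MCD_stable (G : kWVG 3 2) (R : ℚ)
    (hR : 1 < R) (hR2 : R ≤ 2)
    (hp0 : G.p 0 = R) (hp1 : G.p 1 = 1)
    (h12 : G.pref {0} {1}) (h23 : G.pref {1} {2})
    (h : G.pref {1, 2} {0})
    (ω : Outcome G) (hpart : ω.part = {{1, 2}, {0}}) (hx : ω.x = ![1, 1, R - 1]) :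
    MCDStable G ω ∧ SCDStable G ω := by
  have asym : ∀ A B, G.pref A B → ¬ G.pref B A := fun A B hab hba =>
    G.pref_irrefl A (G.pref_trans A B A hab hba)
  have hwle : ∀ A B, G.pref A B → ∑ i ∈ B, G.w i ≤ ∑ i ∈ A, G.w i := fun A B hab =>
    le_of_not_gt fun hlt => asym A B hab (G.pref_weight B A hlt)
  have h13 : G.pref {0} {2} := G.pref_trans _ _ _ h12 h23
  have hw12 : G.w 1 ≤ G.w 0 := by simpa using hwle {0} {1} h12
  have hw13 : G.w 2 ≤ G.w 0 := by simpa using hwle {0} {2} h13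
  have p01_2 : G.pref {0,1} {2} := by
    apply G.pref_weight
    rw [Finset.sum_pair (by decide : (0:Fin 3) ≠ 1), Finset.sum_singleton]
    have := G.w_pos 1; linarith
  have p02_1 : G.pref {0,2} {1} := by
    apply G.pref_weight
    rw [Finset.sum_pair (by decide : (0:Fin 3) ≠ 2), Finset.sum_singleton]
    have := G.w_pos 0; have := G.w_pos 2; linarith
  -- generic value bound
  have vle : ∀ π C, coalitionValue G π C ≤ R := by
    intro π C
    rw [coalitionValue]
    split_ifs with h'
    · calc G.p ⟨_, h'⟩ ≤ G.p 0 := G.p_desc 0 ⟨_, h'⟩ (Fin.zero_le _)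
        _ = R := hp0
    · linarith
  -- payoff sums
  have e0 : ω.x 0 = 1 := by rw [hx]; rfl
  have e1 : ω.x 1 = 1 := by rw [hx]; rfl
  have e2 : ω.x 2 = R - 1 := by rw [hx]; rfl
  have s0 : ∑ i ∈ ({0} : Finset (Fin 3)), ω.x i = 1 := by
    rw [Finset.sum_singleton, e0]
  have s1 : ∑ i ∈ ({1} : Finset (Fin 3)), ω.x i = 1 := by
    rw [Finset.sum_singleton, e1]
  have s2 : ∑ i ∈ ({2} : Finset (Fin 3)), ω.x i = R - 1 := by
    rw [Finset.sum_singleton, e2]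
  have s01 : ∑ i ∈ ({0,1} : Finset (Fin 3)), ω.x i = 2 := by
    rw [Finset.sum_pair (by decide : (0:Fin 3) ≠ 1), e0, e1]; norm_num
  have s02 : ∑ i ∈ ({0,2} : Finset (Fin 3)), ω.x i = R := by
    rw [Finset.sum_pair (by decide : (0:Fin 3) ≠ 2), e0, e2]; ring
  have s12 : ∑ i ∈ ({1,2} : Finset (Fin 3)), ω.x i = R := by
    rw [Finset.sum_pair (by decide : (1:Fin 3) ≠ 2), e1, e2]; ring
  have suniv : ∑ i ∈ (Finset.univ : Finset (Fin 3)), ω.x i = R + 1 := by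
    rw [Fin.sum_univ_three, e0, e1, e2]; ring
  -- specific coalition values
  have hv1 : coalitionValue G {{0},{1},{2}} {1} = 1 := by
    rw [coalitionValue_eq G _ _ 1 (by norm_num)]
    · exact hp1
    · rw [show ({{0},{1},{2}} : Finset (Finset (Fin 3)))
          = insert {0} (insert {1} {({2} : Finset (Fin 3))}) from rfl,
        Finset.filter_insert, if_pos h12, Finset.filter_insert,
        if_neg (G.pref_irrefl {1}), Finset.filter_singleton, if_neg (asym _ _ h23)]
      rfl
  have hv2 : coalitionValue G {{0},{1},{2}} {2} = 0 := by
    apply coalitionValue_eq_zero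
    rw [show ({{0},{1},{2}} : Finset (Finset (Fin 3)))
        = insert {0} (insert {1} {({2} : Finset (Fin 3))}) from rfl,
      Finset.filter_insert, if_pos h13, Finset.filter_insert, if_pos h23,
      Finset.filter_singleton, if_neg (G.pref_irrefl {2})]
    decide
  have hv0 : coalitionValue G {{0},{1,2}} {0} = 1 := by
    rw [coalitionValue_eq G _ _ 1 (by norm_num)]
    · exact hp1
    · rw [show ({{0},{1,2}} : Finset (Finset (Fin 3)))
          = insert {0} {({1,2} : Finset (Fin 3))} from rfl,
        Finset.filter_insert, if_neg (G.pref_irrefl {0}),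
        Finset.filter_singleton, if_pos h]
      rfl
  have stable : MCDStable G ω := by
    rintro ⟨πD, ⟨hne, hnonempty, hdisj⟩, himp⟩
    by_cases hm12 : ({1,2} : Finset (Fin 3)) ∈ πD
    · have hsub : πD ⊆ {{1,2},{0}} := by
        intro B hB
        rcases fin3_subsets B with h'|h'|h'|h'|h'|h'|h'|h' <;> subst h'
        · exact absurd (hnonempty _ hB) (by simp)
        · exact Finset.mem_insert_of_mem (Finset.mem_singleton_self _)
        · exact absurd (hdisj _ hB _ hm12 (by decide)) (by decide)
        · exact absurd (hdisj _ hB _ hm12 (by decide)) (by decide)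
        · exact absurd (hdisj _ hB _ hm12 (by decide)) (by decide)
        · exact absurd (hdisj _ hB _ hm12 (by decide)) (by decide)
        · exact Finset.mem_insert_self _ _
        · exact absurd (hdisj _ hB _ hm12 (by decide)) (by decide)
      have hpart' : IsPartition ({{1,2},{0}} : Finset (Finset (Fin 3))) Finset.univ := by
        refine ⟨?_, ?_, ?_⟩ <;> decide
      have hlt := himp _ hpart' hsub {1,2} hm12
      rw [s12] at hlt
      have := vle {{1,2},{0}} {1,2}
      linarith
    · by_cases hm02 : ({0,2} : Finset (Fin 3)) ∈ πD
      · have hsub : πD ⊆ {{0,2},{1}} := by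
          intro B hB
          rcases fin3_subsets B with h'|h'|h'|h'|h'|h'|h'|h' <;> subst h'
          · exact absurd (hnonempty _ hB) (by simp)
          · exact absurd (hdisj _ hB _ hm02 (by decide)) (by decide)
          · exact Finset.mem_insert_of_mem (Finset.mem_singleton_self _)
          · exact absurd (hdisj _ hB _ hm02 (by decide)) (by decide)
          · exact absurd (hdisj _ hB _ hm02 (by decide)) (by decide)
          · exact Finset.mem_insert_self _ _
          · exact absurd (hdisj _ hB _ hm02 (by decide)) (by decide)
          · exact absurd (hdisj _ hB _ hm02 (by decide)) (by decide)
        have hpart' : IsPartition ({{0,2},{1}} : Finset (Finset (Fin 3))) Finset.univ := by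
          refine ⟨?_, ?_, ?_⟩ <;> decide
        have hlt := himp _ hpart' hsub {0,2} hm02
        rw [s02] at hlt
        have := vle {{0,2},{1}} {0,2}
        linarith
      · by_cases hm01 : ({0,1} : Finset (Fin 3)) ∈ πD
        · have hsub : πD ⊆ {{0,1},{2}} := by
            intro B hB
            rcases fin3_subsets B with h'|h'|h'|h'|h'|h'|h'|h' <;> subst h'
            · exact absurd (hnonempty _ hB) (by simp)
            · exact absurd (hdisj _ hB _ hm01 (by decide)) (by decide)
            · exact absurd (hdisj _ hB _ hm01 (by decide)) (by decide)
            · exact Finset.mem_insert_of_mem (Finset.mem_singleton_self _)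
            · exact Finset.mem_insert_self _ _
            · exact absurd (hdisj _ hB _ hm01 (by decide)) (by decide)
            · exact absurd (hdisj _ hB _ hm01 (by decide)) (by decide)
            · exact absurd (hdisj _ hB _ hm01 (by decide)) (by decide)
          have hpart' : IsPartition ({{0,1},{2}} : Finset (Finset (Fin 3))) Finset.univ := by
            refine ⟨?_, ?_, ?_⟩ <;> decide
          have hlt := himp _ hpart' hsub {0,1} hm01
          rw [s01] at hlt
          have := vle {{0,1},{2}} {0,1}
          linarith
        · by_cases hmu : (Finset.univ : Finset (Fin 3)) ∈ πD
          · have hsub : πD ⊆ {Finset.univ} := by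
              intro B hB
              rcases fin3_subsets B with h'|h'|h'|h'|h'|h'|h'|h' <;> subst h'
              · exact absurd (hnonempty _ hB) (by simp)
              · exact absurd (hdisj _ hB _ hmu (by decide)) (by decide)
              · exact absurd (hdisj _ hB _ hmu (by decide)) (by decide)
              · exact absurd (hdisj _ hB _ hmu (by decide)) (by decide)
              · exact absurd (hdisj _ hB _ hmu (by decide)) (by decide)
              · exact absurd (hdisj _ hB _ hmu (by decide)) (by decide)
              · exact absurd (hdisj _ hB _ hmu (by decide)) (by decide)
              · exact Finset.mem_singleton_self _
            have hpart' : IsPartition ({Finset.univ} : Finset (Finset (Fin 3))) Finset.univ := by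
              refine ⟨?_, ?_, ?_⟩ <;> decide
            have hlt := himp _ hpart' hsub Finset.univ hmu
            rw [suniv] at hlt
            have := vle {Finset.univ} Finset.univ
            linarith
          · -- all coalitions in πD are singletons
            have hsing : ∀ B ∈ πD, B = {0} ∨ B = {1} ∨ B = {2} := by
              intro B hB
              rcases fin3_subsets B with h'|h'|h'|h'|h'|h'|h'|h' <;> subst h'
              · exact absurd (hnonempty _ hB) (by simp)
              · exact Or.inl rfl
              · exact Or.inr (Or.inl rfl)
              · exact Or.inr (Or.inr rfl)
              · exact absurd hB hm01
              · exact absurd hB hm02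
              · exact absurd hB hm12
              · exact absurd hB hmu
            by_cases hm1 : ({1} : Finset (Fin 3)) ∈ πD
            · have hsub : πD ⊆ {{0},{1},{2}} := by
                intro B hB
                rcases hsing B hB with h'|h'|h' <;> subst h' <;> decide
              have hpart' : IsPartition ({{0},{1},{2}} : Finset (Finset (Fin 3))) Finset.univ := by
                refine ⟨?_, ?_, ?_⟩ <;> decide
              have hlt := himp _ hpart' hsub {1} hm1
              rw [s1, hv1] at hlt
              linarith
            · by_cases hm2 : ({2} : Finset (Fin 3)) ∈ πD
              · have hsub : πD ⊆ {{0},{1},{2}} := by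
                  intro B hB
                  rcases hsing B hB with h'|h'|h' <;> subst h' <;> decide
                have hpart' : IsPartition ({{0},{1},{2}} : Finset (Finset (Fin 3))) Finset.univ := by
                  refine ⟨?_, ?_, ?_⟩ <;> decide
                have hlt := himp _ hpart' hsub {2} hm2
                rw [s2, hv2] at hlt
                linarith
              · have hm0 : ({0} : Finset (Fin 3)) ∈ πD := by
                  obtain ⟨B, hB⟩ := hne
                  rcases hsing B hB with h'|h'|h' <;> subst h'
                  · exact hB
                  · exact absurd hB hm1
                  · exact absurd hB hm2
                have hsub : πD ⊆ {{0},{1,2}} := by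
                  intro B hB
                  rcases hsing B hB with h'|h'|h' <;> subst h'
                  · exact Finset.mem_insert_self _ _
                  · exact absurd hB hm1
                  · exact absurd hB hm2
                have hpart' : IsPartition ({{0},{1,2}} : Finset (Finset (Fin 3))) Finset.univ := by
                  refine ⟨?_, ?_, ?_⟩ <;> decide
                have hlt := himp _ hpart' hsub {0} hm0
                rw [s0, hv0] at hlt
                linarith
  refine ⟨stable, ?_⟩
  rintro ⟨C, hCne, hC⟩
  refine stable ⟨{C}, ⟨⟨C, Finset.mem_singleton_self C⟩,
    fun B hB => (Finset.mem_singleton.mp hB) ▸ hCne,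
    fun A hA B hB hAB => absurd ((Finset.mem_singleton.mp hA).trans
      (Finset.mem_singleton.mp hB).symm) hAB⟩,
    fun π' hπ' hsub C' hC' => ?_⟩
  rw [Finset.mem_singleton.mp hC']
  exact hC π' hπ' (hsub (Finset.mem_singleton_self C))
end

section
/- Let G be a k-WVG with 3 players and 2 prizes p = (R, 1) where 1 < R ≤ 2, with players labeled so that {1} ≻ {2} ≻ {3}. If {2,3} ≻ {1}, then every SCD-stable outcome of G has payoff vector x = (1, 1, R−1). -/
open Finset
open scoped Classical

variable {n k : ℕ}

set_option maxRecDepth 10000 in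
lemma partitions3 (π : Finset (Finset (Fin 3))) (hπ : IsPartition π Finset.univ) :
    π = {Finset.univ} ∨ π = {{0}, {1, 2}} ∨ π = {{1}, {0, 2}} ∨
      π = {{2}, {0, 1}} ∨ π = {{0}, {1}, {2}} := by
  unfold IsPartition at hπ
  revert hπ
  revert π
  decide

/-- In a 3-player 2-prize game with prizes `(R, 1)`, `1 < R ≤ 2`, players labelled in
`≻`-descending order, if `{2,3} ≻ {1}` then every SCD-stable outcome has payoff
vector `(1, 1, R-1)`. -/
theorem three_player_two_prize_case2_unique_payoff (G : kWVG 3 2) (R : ℚ)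
    (hR : 1 < R) (hR2 : R ≤ 2)
    (hp0 : G.p 0 = R) (hp1 : G.p 1 = 1)
    (h12 : G.pref {0} {1}) (h23 : G.pref {1} {2})
    (h : G.pref {1, 2} {0}) :
    ∀ ω : Outcome G, SCDStable G ω → ω.x = ![1, 1, R - 1] := by
  intro ω hst
  have asym : ∀ A B : Finset (Fin 3), G.pref A B → ¬ G.pref B A := fun A B hab hba =>
    G.pref_irrefl A (G.pref_trans A B A hab hba)
  have h13 : G.pref {0} {2} := G.pref_trans _ _ _ h12 h23
  have hw01 : G.w 1 ≤ G.w 0 := by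
    by_contra hlt
    push_neg at hlt
    exact asym _ _ h12 (G.pref_weight _ _ (by simpa using hlt))
  have hw12 : G.w 2 ≤ G.w 1 := by
    by_contra hlt
    push_neg at hlt
    exact asym _ _ h23 (G.pref_weight _ _ (by simpa using hlt))
  have hpref02 : G.pref {0, 2} {1} := by
    apply G.pref_weight
    have h0 := G.w_pos 2
    rw [Finset.sum_pair (by decide : (0 : Fin 3) ≠ 2), Finset.sum_singleton]
    linarith
  have hpref01 : G.pref {0, 1} {2} := by
    apply G.pref_weight
    have h0 := G.w_pos 0
    rw [Finset.sum_pair (by decide : (0 : Fin 3) ≠ 1), Finset.sum_singleton]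
    linarith
  -- value computations
  have rankTop : ∀ A B : Finset (Fin 3), G.pref A B → coalitionValue G {A, B} A = R := by
    intro A B hAB
    have hf : ({A, B} : Finset (Finset (Fin 3))).filter (fun C' => G.pref C' A) = ∅ := by
      rw [Finset.filter_insert, if_neg (G.pref_irrefl A), Finset.filter_singleton,
        if_neg (asym A B hAB)]
    rw [coalitionValue, hf]
    simp only [Finset.card_empty]
    erw [dif_pos (by norm_num : (0 : ℕ) < 2)]
    exact hp0
  have rankBot : ∀ A B : Finset (Fin 3), G.pref A B → coalitionValue G {A, B} B = 1 := by
    intro A B hAB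
    have hf : ({A, B} : Finset (Finset (Fin 3))).filter (fun C' => G.pref C' B) = {A} := by
      rw [Finset.filter_insert, if_pos hAB, Finset.filter_singleton,
        if_neg (G.pref_irrefl B)]
      rfl
    rw [coalitionValue, hf]
    simp only [Finset.card_singleton]
    rw [dif_pos (by norm_num : (1 : ℕ) < 2)]
    exact hp1
  have vP1 : coalitionValue G {Finset.univ} Finset.univ = R := by
    have hf : ({Finset.univ} : Finset (Finset (Fin 3))).filter
        (fun C' => G.pref C' Finset.univ) = ∅ := by
      rw [Finset.filter_singleton, if_neg (G.pref_irrefl _)]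
    rw [coalitionValue, hf]
    simp only [Finset.card_empty]
    erw [dif_pos (by norm_num : (0 : ℕ) < 2)]
    exact hp0
  have vP5_0 : coalitionValue G {{0}, {1}, {2}} {0} = R := by
    have hf : ({{0}, {1}, {2}} : Finset (Finset (Fin 3))).filter
        (fun C' => G.pref C' {0}) = ∅ := by
      rw [Finset.filter_insert, if_neg (G.pref_irrefl _), Finset.filter_insert,
        if_neg (asym _ _ h12), Finset.filter_singleton, if_neg (asym _ _ h13)]
    rw [coalitionValue, hf]
    simp only [Finset.card_empty]
    erw [dif_pos (by norm_num : (0 : ℕ) < 2)]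
    exact hp0
  have vP5_1 : coalitionValue G {{0}, {1}, {2}} {1} = 1 := by
    have hf : ({{0}, {1}, {2}} : Finset (Finset (Fin 3))).filter
        (fun C' => G.pref C' {1}) = {{0}} := by
      rw [Finset.filter_insert, if_pos h12, Finset.filter_insert,
        if_neg (G.pref_irrefl _), Finset.filter_singleton, if_neg (asym _ _ h23)]
      rfl
    rw [coalitionValue, hf]
    simp only [Finset.card_singleton]
    rw [dif_pos (by norm_num : (1 : ℕ) < 2)]
    exact hp1
  have vP5_2 : coalitionValue G {{0}, {1}, {2}} {2} = 0 := by
    have hf : ({{0}, {1}, {2}} : Finset (Finset (Fin 3))).filter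
        (fun C' => G.pref C' {2}) = {{0}, {1}} := by
      rw [Finset.filter_insert, if_pos h13, Finset.filter_insert,
        if_pos h23, Finset.filter_singleton, if_neg (G.pref_irrefl _)]
      rfl
    rw [coalitionValue, hf]
    rw [Finset.card_insert_of_notMem (by decide), Finset.card_singleton]
    rw [dif_neg (by norm_num)]
  -- total payoff bound
  have hx3 : ∑ i, ω.x i = ω.x 0 + ω.x 1 + ω.x 2 := Fin.sum_univ_three _
  have htot : ω.x 0 + ω.x 1 + ω.x 2 ≤ R + 1 := by
    rcases partitions3 ω.part ω.ispart with hπ | hπ | hπ | hπ | hπ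
    · have hb := ω.x_budget Finset.univ (by rw [hπ]; exact Finset.mem_singleton_self _)
      rw [hπ, vP1, hx3] at hb
      linarith
    · have hb1 := ω.x_budget {0} (by rw [hπ]; decide)
      have hb2 := ω.x_budget {1, 2} (by rw [hπ]; decide)
      rw [hπ, Finset.pair_comm ({0} : Finset (Fin 3)) {1, 2}] at hb1 hb2
      rw [rankBot _ _ h, Finset.sum_singleton] at hb1
      rw [rankTop _ _ h, Finset.sum_pair (by decide : (1 : Fin 3) ≠ 2)] at hb2
      linarith
    · have hb1 := ω.x_budget {1} (by rw [hπ]; decide)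
      have hb2 := ω.x_budget {0, 2} (by rw [hπ]; decide)
      rw [hπ, Finset.pair_comm ({1} : Finset (Fin 3)) {0, 2}] at hb1 hb2
      rw [rankBot _ _ hpref02, Finset.sum_singleton] at hb1
      rw [rankTop _ _ hpref02, Finset.sum_pair (by decide : (0 : Fin 3) ≠ 2)] at hb2
      linarith
    · have hb1 := ω.x_budget {2} (by rw [hπ]; decide)
      have hb2 := ω.x_budget {0, 1} (by rw [hπ]; decide)
      rw [hπ, Finset.pair_comm ({2} : Finset (Fin 3)) {0, 1}] at hb1 hb2
      rw [rankBot _ _ hpref01, Finset.sum_singleton] at hb1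
      rw [rankTop _ _ hpref01, Finset.sum_pair (by decide : (0 : Fin 3) ≠ 1)] at hb2
      linarith
    · have hb0 := ω.x_budget {0} (by rw [hπ]; decide)
      have hb1 := ω.x_budget {1} (by rw [hπ]; decide)
      have hb2 := ω.x_budget {2} (by rw [hπ]; decide)
      rw [hπ, vP5_0, Finset.sum_singleton] at hb0
      rw [hπ, vP5_1, Finset.sum_singleton] at hb1
      rw [hπ, vP5_2, Finset.sum_singleton] at hb2
      linarith
  -- stability constraints
  have hst' : ∀ C : Finset (Fin 3), C.Nonempty →
      ∃ π', IsPartition π' Finset.univ ∧ C ∈ π' ∧ coalitionValue G π' C ≤ ∑ i ∈ C, ω.x i := by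
    intro C hC
    by_contra hcon
    push_neg at hcon
    exact hst ⟨C, hC, fun π' h1 h2 => hcon π' h1 h2⟩
  have c23 : R ≤ ω.x 1 + ω.x 2 := by
    obtain ⟨π', hπ', hmem, hle⟩ := hst' {1, 2} ⟨1, by decide⟩
    rcases partitions3 π' hπ' with h' | h' | h' | h' | h'
    all_goals subst h'
    · exact absurd hmem (by decide)
    · rw [Finset.pair_comm ({0} : Finset (Fin 3)) {1, 2}, rankTop _ _ h,
        Finset.sum_pair (by decide : (1 : Fin 3) ≠ 2)] at hle
      exact hle
    · exact absurd hmem (by decide)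
    · exact absurd hmem (by decide)
    · exact absurd hmem (by decide)
  have c02 : R ≤ ω.x 0 + ω.x 2 := by
    obtain ⟨π', hπ', hmem, hle⟩ := hst' {0, 2} ⟨0, by decide⟩
    rcases partitions3 π' hπ' with h' | h' | h' | h' | h'
    all_goals subst h'
    · exact absurd hmem (by decide)
    · exact absurd hmem (by decide)
    · rw [Finset.pair_comm ({1} : Finset (Fin 3)) {0, 2}, rankTop _ _ hpref02,
        Finset.sum_pair (by decide : (0 : Fin 3) ≠ 2)] at hle
      exact hle
    · exact absurd hmem (by decide)
    · exact absurd hmem (by decide)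
  have c0 : 1 ≤ ω.x 0 := by
    obtain ⟨π', hπ', hmem, hle⟩ := hst' {0} ⟨0, by decide⟩
    rcases partitions3 π' hπ' with h' | h' | h' | h' | h'
    all_goals subst h'
    · exact absurd hmem (by decide)
    · rw [Finset.pair_comm ({0} : Finset (Fin 3)) {1, 2}, rankBot _ _ h,
        Finset.sum_singleton] at hle
      exact hle
    · exact absurd hmem (by decide)
    · exact absurd hmem (by decide)
    · rw [vP5_0, Finset.sum_singleton] at hle
      linarith
  have c1 : 1 ≤ ω.x 1 := by
    obtain ⟨π', hπ', hmem, hle⟩ := hst' {1} ⟨1, by decide⟩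
    rcases partitions3 π' hπ' with h' | h' | h' | h' | h'
    all_goals subst h'
    · exact absurd hmem (by decide)
    · exact absurd hmem (by decide)
    · rw [Finset.pair_comm ({1} : Finset (Fin 3)) {0, 2}, rankBot _ _ hpref02,
        Finset.sum_singleton] at hle
      exact hle
    · exact absurd hmem (by decide)
    · rw [vP5_1, Finset.sum_singleton] at hle
      exact hle
  have e0 : ω.x 0 = 1 := by linarith
  have e2 : R - 1 ≤ ω.x 2 := by linarith
  have e1 : ω.x 1 = 1 := by linarith
  have e2' : ω.x 2 = R - 1 := by linarith
  funext i
  fin_cases i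
  · simpa using e0
  · simpa using e1
  · simpa using e2'
end

section
/- In an irreducible k-uniform-prize WVG, letting w* = w(N)/(k+1), either (i) every player has weight strictly less than w*, or (ii) exactly one player i has weight w_i = w*, every other player has weight strictly less than w*, and the players N∖{i} can be partitioned into k coalitions each of weight w* each of which beats {i} with respect to ≻. -/
open Finset
open scoped Classical

variable {n k : ℕ}

/-- In a uniform-prize game (all prizes of value 1), a singleton winner is a player `i`
that wins a prize as a singleton regardless of the coalition structure of the others. -/
def SingletonWinner (G : kWVG n k) (i : Fin n) : Prop :=
  ∀ π, IsPartition π Finset.univ → {i} ∈ π → coalitionValue G π {i} = 1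

/-- If `i ∈ C` and `C` has total weight exactly `w i`, then `C = {i}`. -/
lemma aux_eq_singleton_of_sum (G : kWVG n k) {C : Finset (Fin n)} {i : Fin n}
    (hiC : i ∈ C) (hw : ∑ j ∈ C, G.w j = G.w i) : C = {i} := by
  by_contra h
  obtain ⟨j, hjC, hji⟩ : ∃ j ∈ C, j ≠ i := by
    by_contra hc; push_neg at hc
    exact h (Finset.eq_singleton_iff_unique_mem.mpr ⟨hiC, hc⟩)
  have h1 : ∑ l ∈ C, G.w l = G.w i + ∑ l ∈ C.erase i, G.w l :=
    (Finset.add_sum_erase _ _ hiC).symm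
  have h2 : 0 < ∑ l ∈ C.erase i, G.w l :=
    Finset.sum_pos (fun l _ => G.w_pos l) ⟨j, Finset.mem_erase.mpr ⟨hji, hjC⟩⟩
  linarith

/-- Key lemma: if `i` is not a singleton winner in a uniform-prize game, then
`(k+1) * w i ≤ w(N)`, and in case of equality `N \ {i}` partitions into `k` coalitions
of weight `w i` each beating `{i}`. -/
lemma aux_key (G : kWVG n k) (hp : ∀ j, G.p j = 1) (i : Fin n)
    (h : ¬ SingletonWinner G i) :
    ((k : ℚ) + 1) * G.w i ≤ ∑ j, G.w j ∧
    (((k : ℚ) + 1) * G.w i = ∑ j, G.w j →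
      ∃ π, IsPartition π (Finset.univ \ {i}) ∧ π.card = k ∧
        ∀ C ∈ π, (∑ j ∈ C, G.w j) = G.w i ∧ G.pref C {i}) := by
  unfold SingletonWinner at h
  push_neg at h
  obtain ⟨π, hπ, hiπ, hv⟩ := h
  set F := π.filter (fun C' => G.pref C' {i}) with hF
  have hkF : k ≤ F.card := by
    by_contra hc
    push_neg at hc
    exact hv (by rw [coalitionValue, dif_pos hc, hp])
  have hiF : {i} ∉ F := fun hmem => G.pref_irrefl {i} (Finset.mem_filter.mp hmem).2
  have hFπ : F ⊆ π := Finset.filter_subset _ _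
  have hwC : ∀ C ∈ F, G.w i ≤ ∑ j ∈ C, G.w j := by
    intro C hC
    by_contra hc
    push_neg at hc
    have h1 : G.pref {i} C := G.pref_weight _ _ (by simpa using hc)
    exact G.pref_irrefl _ (G.pref_trans _ _ _ h1 (Finset.mem_filter.mp hC).2)
  have hdisj : (↑π : Set (Finset (Fin n))).PairwiseDisjoint id :=
    fun A hA B hB hAB => hπ.2.1 A hA B hB hAB
  have hWsum : ∑ C ∈ π, ∑ j ∈ C, G.w j = ∑ j, G.w j := by
    have hb := Finset.sum_biUnion (f := G.w) hdisj
    simp only [id_eq] at hb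
    have hbu : π.biUnion id = Finset.univ := by
      rw [← Finset.sup_eq_biUnion]; exact hπ.2.2
    rw [← hb, hbu]
  have hsub : insert {i} F ⊆ π := Finset.insert_subset hiπ hFπ
  have hS1 : ∑ C ∈ insert {i} F, ∑ j ∈ C, G.w j
      = G.w i + ∑ C ∈ F, ∑ j ∈ C, G.w j := by
    rw [Finset.sum_insert hiF, Finset.sum_singleton]
  have hFsum : (F.card : ℚ) * G.w i ≤ ∑ C ∈ F, ∑ j ∈ C, G.w j := by
    have := Finset.card_nsmul_le_sum F _ _ hwC
    simpa [nsmul_eq_mul] using this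
  have hk' : (k : ℚ) * G.w i ≤ (F.card : ℚ) * G.w i :=
    mul_le_mul_of_nonneg_right (by exact_mod_cast hkF) (le_of_lt (G.w_pos i))
  have hle1 : ∑ C ∈ insert {i} F, ∑ j ∈ C, G.w j ≤ ∑ C ∈ π, ∑ j ∈ C, G.w j :=
    Finset.sum_le_sum_of_subset_of_nonneg hsub
      (fun C _ _ => Finset.sum_nonneg fun j _ => (G.w_pos j).le)
  have hring : ((k : ℚ) + 1) * G.w i = G.w i + (k : ℚ) * G.w i := by ring
  refine ⟨by linarith, fun heq => ?_⟩
  -- all inequalities are equalities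
  have e2 : (F.card : ℚ) * G.w i = ∑ C ∈ F, ∑ j ∈ C, G.w j := by linarith
  have e3 : (k : ℚ) * G.w i = (F.card : ℚ) * G.w i := by linarith
  have hcard : F.card = k :=
    (Nat.cast_injective (mul_right_cancel₀ (ne_of_gt (G.w_pos i)) e3)).symm
  have hsd : ∑ C ∈ π \ insert {i} F, ∑ j ∈ C, G.w j = 0 := by
    rw [Finset.sum_sdiff_eq_sub hsub]; linarith
  have hempty : π \ insert {i} F = ∅ := by
    by_contra hne
    replace hne := Finset.nonempty_iff_ne_empty.mpr hne
    have : 0 < ∑ C ∈ π \ insert {i} F, ∑ j ∈ C, G.w j :=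
      Finset.sum_pos
        (fun C hC => Finset.sum_pos (fun j _ => G.w_pos j)
          (hπ.1 C (Finset.mem_sdiff.mp hC).1)) hne
    linarith
  have hπeq : π = insert {i} F :=
    subset_antisymm (Finset.sdiff_eq_empty_iff_subset.mp hempty) hsub
  have hCval : ∀ C ∈ F, ∑ j ∈ C, G.w j = G.w i := by
    intro C hC
    by_contra hne
    have hlt : G.w i < ∑ j ∈ C, G.w j := lt_of_le_of_ne (hwC C hC) (Ne.symm hne)
    have hstrict : ∑ C' ∈ F, G.w i < ∑ C' ∈ F, ∑ j ∈ C', G.w j :=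
      Finset.sum_lt_sum (fun C' hC' => hwC C' hC') ⟨C, hC, hlt⟩
    rw [Finset.sum_const, nsmul_eq_mul] at hstrict
    linarith
  have hsup : ({i} : Finset (Fin n)) ∪ F.sup id = Finset.univ := by
    have h2 := hπ.2.2
    rw [hπeq, Finset.sup_insert] at h2
    simpa [Finset.sup_eq_union] using h2
  have hinot : i ∉ F.sup id := by
    intro hmem
    rw [Finset.mem_sup] at hmem
    obtain ⟨C, hC, hiC⟩ := hmem
    have hne : ({i} : Finset (Fin n)) ≠ C := fun he => hiF (he ▸ hC)
    have hd := hπ.2.1 {i} hiπ C (hFπ hC) hne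
    exact (Finset.disjoint_left.mp hd (Finset.mem_singleton_self i)) hiC
  refine ⟨F, ⟨fun C hC => hπ.1 C (hFπ hC),
      fun A hA B hB hAB => hπ.2.1 A (hFπ hA) B (hFπ hB) hAB, ?_⟩,
      hcard, fun C hC => ⟨hCval C hC, (Finset.mem_filter.mp hC).2⟩⟩
  apply Finset.ext
  intro j
  simp only [Finset.mem_sdiff, Finset.mem_univ, true_and, Finset.mem_singleton]
  constructor
  · intro hj
    exact fun hji => hinot (hji ▸ hj)
  · intro hji
    have hju : j ∈ ({i} : Finset (Fin n)) ∪ F.sup id := hsup ▸ Finset.mem_univ j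
    rcases Finset.mem_union.mp hju with hmem | hmem
    · exact absurd (Finset.mem_singleton.mp hmem) hji
    · exact hmem

/-- In an irreducible `k`-uniform-prize WVG (no singleton winners), with
`w* := w(N)/(k+1)`: either every player weighs strictly less than `w*`, or exactly one
player `i` weighs exactly `w*`, all others weigh strictly less, and `N \ {i}` can be
partitioned into `k` coalitions, each of weight `w*` and each beating `{i}` w.r.t. `≻`. -/
theorem irreducible_game_characterisation (n k : ℕ) (G : kWVG n k)
    (hp : ∀ j, G.p j = 1) (hirr : ∀ i, ¬ SingletonWinner G i) :
    (∀ i, G.w i < (∑ j, G.w j) / (k + 1)) ∨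
    (∃ i, G.w i = (∑ j, G.w j) / (k + 1) ∧
      (∀ j, j ≠ i → G.w j < (∑ j', G.w j') / (k + 1)) ∧
      ∃ π, IsPartition π (Finset.univ \ {i}) ∧ π.card = k ∧
        ∀ C ∈ π, (∑ j ∈ C, G.w j) = (∑ j', G.w j') / (k + 1) ∧ G.pref C {i}) := by
  have hk1 : (0 : ℚ) < (k : ℚ) + 1 := by positivity
  have hle : ∀ i, ((k : ℚ) + 1) * G.w i ≤ ∑ j, G.w j :=
    fun i => (aux_key G hp i (hirr i)).1
  by_cases h : ∃ i, ((k : ℚ) + 1) * G.w i = ∑ j, G.w j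
  · obtain ⟨i, hi⟩ := h
    right
    have hwi : G.w i = (∑ j, G.w j) / ((k : ℚ) + 1) := by
      field_simp
      linarith
    refine ⟨i, hwi, ?_, ?_⟩
    · intro j hji
      have hjle := hle j
      rcases lt_or_eq_of_le hjle with hlt | heqj
      · rw [lt_div_iff₀ hk1, mul_comm]; exact hlt
      · -- two distinct players of maximal weight: contradiction
        exfalso
        have hwij : G.w i = G.w j :=
          mul_left_cancel₀ (ne_of_gt hk1) (by rw [hi, heqj])
        obtain ⟨πi, hπi, _, hπiC⟩ := (aux_key G hp i (hirr i)).2 hi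
        obtain ⟨πj, hπj, _, hπjC⟩ := (aux_key G hp j (hirr j)).2 heqj
        -- i lies in some coalition of πj, which must be {i}
        have hiin : i ∈ πj.sup id := by
          rw [hπj.2.2]
          simp [Ne.symm hji]
        rw [Finset.mem_sup] at hiin
        obtain ⟨C, hC, hiC⟩ := hiin
        have hCi : C = {i} :=
          aux_eq_singleton_of_sum G hiC (by rw [(hπjC C hC).1, ← hwij])
        have hprefij : G.pref {i} {j} := hCi ▸ (hπjC C hC).2
        -- j lies in some coalition of πi, which must be {j}
        have hjin : j ∈ πi.sup id := by
          rw [hπi.2.2]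
          simp [hji]
        rw [Finset.mem_sup] at hjin
        obtain ⟨D, hD, hjD⟩ := hjin
        have hDj : D = {j} :=
          aux_eq_singleton_of_sum G hjD (by rw [(hπiC D hD).1, hwij])
        have hprefji : G.pref {j} {i} := hDj ▸ (hπiC D hD).2
        exact G.pref_irrefl _ (G.pref_trans _ _ _ hprefij hprefji)
    · obtain ⟨π, hpart, hcard, hC⟩ := (aux_key G hp i (hirr i)).2 hi
      exact ⟨π, hpart, hcard, fun C hCmem =>
        ⟨by rw [(hC C hCmem).1, hwi], (hC C hCmem).2⟩⟩
  · left
    push_neg at h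
    intro i
    rw [lt_div_iff₀ hk1, mul_comm]
    exact lt_of_le_of_ne (hle i) (h i)
end
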